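/- arXiv:1402.1199 — 7 statements merged into one kernel-verified Lean document; each statement's English description precedes it below -/
import Mathlib

section
/- (Sylvester's unimodality theorem.) For all nonnegative integers m, n and all integers r with 1 ≤ r and 2r ≤ mn, one has p_{r−1}(m,n) ≤ p_r(m,n). -/
open Finset
namespace Syl
variable {m n : ℕ}
abbrev Box (m n : ℕ) := Fin m → Fin (n + 1)
def dec (g : Box m n) (i : Fin m) : Box m n :=
  fun k => if k = i then ⟨(g i : ℕ) - 1, by have := (g i).isLt; omega⟩ else g k
def inc (g : Box m n) (i : Fin m) : Box m n :=
  fun k => if k = i then ⟨min ((g i : ℕ) + 1) n, by omega⟩ else g k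
def Anat (n k : ℕ) : ℕ := k * (n + 1 - k)
def Bnat (n k : ℕ) : ℕ := (k + 1) * (n - k)

noncomputable def Xop (v : Box m n → ℝ) : Box m n → ℝ :=
  fun g => ∑ i, Real.sqrt (Anat n (g i)) * v (dec g i)

noncomputable def Yop (v : Box m n → ℝ) : Box m n → ℝ :=
  fun g => ∑ i, Real.sqrt (Bnat n (g i)) * v (inc g i)

def ip (v u : Box m n → ℝ) : ℝ := ∑ g, v g * u g

lemma dec_apply (g : Box m n) (i k : Fin m) :
    ((dec g i) k : ℕ) = if k = i then (g i : ℕ) - 1 else (g k : ℕ) := by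
  simp [dec, apply_ite (Fin.val)]
lemma inc_apply (g : Box m n) (i k : Fin m) :
    ((inc g i) k : ℕ) = if k = i then min ((g i : ℕ) + 1) n else (g k : ℕ) := by
  simp [inc, apply_ite (Fin.val)]
lemma inc_dec (g : Box m n) (i : Fin m) (h : (g i : ℕ) ≠ 0) : inc (dec g i) i = g := by
  funext k; apply Fin.ext
  simp only [inc_apply, dec_apply, if_pos rfl]
  have := (g i).isLt
  split_ifs with hk
  · subst hk; omega
  · rfl
lemma dec_inc (g : Box m n) (i : Fin m) (h : (g i : ℕ) ≠ n) : dec (inc g i) i = g := by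
  funext k; apply Fin.ext
  simp only [dec_apply, inc_apply, if_pos rfl]
  have := (g i).isLt
  split_ifs with hk
  · subst hk; omega
  · rfl
lemma Bnat_dec (n k : ℕ) (h : k ≠ 0) (h2 : k ≤ n) : Bnat n (k - 1) = Anat n k := by
  unfold Bnat Anat
  rw [show k - 1 + 1 = k by omega, show n - (k-1) = n + 1 - k by omega]

lemma adj (v u : Box m n → ℝ) : ip (Xop v) u = ip v (Yop u) := by
  unfold ip Xop Yop
  simp_rw [Finset.sum_mul, Finset.mul_sum]
  rw [Finset.sum_comm]
  conv_rhs => rw [Finset.sum_comm]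
  refine Finset.sum_congr rfl fun i _ => ?_
  have h1 : ∀ g ∈ (Finset.univ : Finset (Box m n)),
      (Real.sqrt (Anat n (g i)) * v (dec g i)) * u g ≠ 0 → (g i : ℕ) ≠ 0 :=
    fun g _ hg hc => hg (by simp [Anat, hc])
  have h2 : ∀ g ∈ (Finset.univ : Finset (Box m n)),
      v g * (Real.sqrt (Bnat n (g i)) * u (inc g i)) ≠ 0 → (g i : ℕ) ≠ n :=
    fun g _ hg hc => hg (by simp [Bnat, hc])
  rw [← Finset.sum_filter_of_ne h1]
  conv_rhs => rw [← Finset.sum_filter_of_ne h2]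
  refine Finset.sum_nbij' (fun g => dec g i) (fun g => inc g i) ?_ ?_ ?_ ?_ ?_
  · intro g hg
    rw [Finset.mem_filter] at hg ⊢
    refine ⟨Finset.mem_univ _, ?_⟩
    rw [dec_apply, if_pos rfl]
    have := (g i).isLt
    have := hg.2
    omega
  · intro g hg
    rw [Finset.mem_filter] at hg ⊢
    refine ⟨Finset.mem_univ _, ?_⟩
    rw [inc_apply, if_pos rfl]
    have := (g i).isLt
    have := hg.2
    omega
  · intro g hg
    exact inc_dec g i (Finset.mem_filter.mp hg).2
  · intro g hg
    exact dec_inc g i (Finset.mem_filter.mp hg).2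
  · intro g hg
    have hg0 := (Finset.mem_filter.mp hg).2
    have hle := (g i).isLt
    rw [inc_dec g i hg0]
    rw [dec_apply, if_pos rfl, Bnat_dec n (g i) hg0 (by omega)]
    ring
lemma Anat_inc (n k : ℕ) (h : k < n) : Anat n (k + 1) = Bnat n k := by
  unfold Bnat Anat
  rw [show n + 1 - (k+1) = n - k by omega]

lemma sqrt_mul_sqrt (a b : ℕ) (h : a = b) :
    Real.sqrt a * Real.sqrt b = (a : ℝ) := by
  subst h; exact Real.mul_self_sqrt (Nat.cast_nonneg a)

lemma inc_dec_comm (g : Box m n) (i j : Fin m) (hij : j ≠ i) :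
    inc (dec g i) j = dec (inc g j) i := by
  funext k
  apply Fin.ext
  simp only [inc_apply, dec_apply, if_neg hij, if_neg (show ¬ i = j from fun h => hij h.symm)]
  split_ifs with h1 h2 <;> first
    | rfl
    | (exact absurd (h1.symm.trans h2) hij)

def wt (g : Box m n) : ℕ := ∑ i, (g i : ℕ)

lemma comm_apply (v : Box m n → ℝ) (g : Box m n) :
    Xop (Yop v) g - Yop (Xop v) g = (2 * (wt g : ℝ) - (m : ℝ) * n) * v g := by
  unfold Xop Yop
  simp_rw [Finset.mul_sum]
  rw [Finset.sum_comm (γ := Fin m)]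
  rw [← Finset.sum_sub_distrib]
  simp_rw [← Finset.sum_sub_distrib]
  have key : ∀ i j : Fin m,
      Real.sqrt (Anat n (g i)) * (Real.sqrt (Bnat n ((dec g i) j)) * v (inc (dec g i) j))
      - Real.sqrt (Bnat n (g j)) * (Real.sqrt (Anat n ((inc g j) i)) * v (dec (inc g j) i))
      = if j = i then ((Anat n (g i) : ℝ) - (Bnat n (g i) : ℝ)) * v g else 0 := by
    intro i j
    rcases eq_or_ne j i with rfl | hij
    · rw [if_pos rfl]
      have hlt := (g j).isLt
      have hT1 : Real.sqrt (Anat n (g j)) * (Real.sqrt (Bnat n ((dec g j) j)) * v (inc (dec g j) j))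
          = (Anat n (g j) : ℝ) * v g := by
        rcases eq_or_ne ((g j : ℕ)) 0 with h0 | h0
        · simp [Anat, h0]
        · rw [inc_dec g j h0, ← mul_assoc, dec_apply, if_pos rfl,
            sqrt_mul_sqrt _ _ (by rw [Bnat_dec n (g j) h0 (by omega)])]
      have hT2 : Real.sqrt (Bnat n (g j)) * (Real.sqrt (Anat n ((inc g j) j)) * v (dec (inc g j) j))
          = (Bnat n (g j) : ℝ) * v g := by
        rcases eq_or_ne ((g j : ℕ)) n with h0 | h0
        · simp [Bnat, h0]
        · rw [dec_inc g j h0, ← mul_assoc, inc_apply, if_pos rfl,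
            show min ((g j : ℕ) + 1) n = (g j : ℕ) + 1 by omega,
            sqrt_mul_sqrt _ _ (by rw [Anat_inc n (g j) (by omega)])]
      rw [hT1, hT2]; ring
    · rw [if_neg hij]
      have e1 : ((dec g i) j : ℕ) = (g j : ℕ) := by rw [dec_apply, if_neg hij]
      have e2 : ((inc g j) i : ℕ) = (g i : ℕ) := by
        rw [inc_apply, if_neg (show ¬ i = j from fun h => hij h.symm)]
      rw [e1, e2, inc_dec_comm g i j hij]
      ring
  rw [Finset.sum_congr rfl (fun j _ => Finset.sum_congr rfl (fun i _ => key i j))]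
  simp only [Finset.sum_ite_eq, Finset.mem_univ, if_true]
  rw [← Finset.sum_mul]
  congr 1
  have hpt : ∀ i : Fin m, ((Anat n (g i) : ℝ) - (Bnat n (g i) : ℝ)) = 2 * ((g i : ℕ) : ℝ) - n := by
    intro i
    have hle : ((g i : ℕ)) ≤ n := by have := (g i).isLt; omega
    unfold Anat Bnat
    push_cast [Nat.cast_sub (by omega : (g i : ℕ) ≤ n + 1), Nat.cast_sub hle]
    ring
  rw [Finset.sum_congr rfl (fun i _ => hpt i), Finset.sum_sub_distrib, ← Finset.mul_sum]
  unfold wt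
  push_cast
  simp [Finset.card_univ, mul_comm]

lemma wt_dec (g : Box m n) (i : Fin m) (h : (g i : ℕ) ≠ 0) : wt (dec g i) + 1 = wt g := by
  unfold wt
  rw [← Finset.add_sum_erase _ _ (Finset.mem_univ i),
      ← Finset.add_sum_erase _ (fun k => ((g k : ℕ))) (Finset.mem_univ i)]
  rw [Finset.sum_congr rfl (fun k hk => by
    rw [dec_apply, if_neg (Finset.ne_of_mem_erase hk)])]
  rw [dec_apply, if_pos rfl]
  omega

lemma wt_comp_perm (g : Box m n) (σ : Equiv.Perm (Fin m)) : wt (g ∘ ⇑σ) = wt g :=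
  Equiv.sum_comp σ (fun j => ((g j : ℕ)))

lemma dec_comp_perm (g : Box m n) (σ : Equiv.Perm (Fin m)) (i : Fin m) :
    dec (g ∘ ⇑σ) i = dec g (σ i) ∘ ⇑σ := by
  funext k
  apply Fin.ext
  simp only [Function.comp_apply, dec_apply, EmbeddingLike.apply_eq_iff_eq]

lemma Xop_comp_perm (σ : Equiv.Perm (Fin m)) (v : Box m n → ℝ)
    (hv : ∀ f : Box m n, v (f ∘ ⇑σ) = v f) (g : Box m n) :
    Xop v (g ∘ ⇑σ) = Xop v g := by
  unfold Xop
  calc ∑ i, Real.sqrt (Anat n ((g ∘ ⇑σ) i)) * v (dec (g ∘ ⇑σ) i)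
      = ∑ i, Real.sqrt (Anat n (g (σ i))) * v (dec g (σ i)) := by
        refine Finset.sum_congr rfl fun i _ => ?_
        rw [dec_comp_perm, hv]
        rfl
    _ = ∑ i, Real.sqrt (Anat n (g i)) * v (dec g i) :=
        Equiv.sum_comp σ (fun j => Real.sqrt (Anat n (g j)) * v (dec g j))

lemma Xop_supp (v : Box m n → ℝ) (w : ℕ) (hv : ∀ f : Box m n, v f ≠ 0 → wt f = w)
    (g : Box m n) (hg : wt g ≠ w + 1) : Xop v g = 0 := by
  unfold Xop
  refine Finset.sum_eq_zero fun i _ => ?_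
  rcases eq_or_ne ((g i : ℕ)) 0 with h0 | h0
  · simp [Anat, h0]
  · rcases eq_or_ne (v (dec g i)) 0 with h1 | h1
    · simp [h1]
    · exfalso
      have := hv _ h1
      have := wt_dec g i h0
      omega

lemma ip_comm (v u : Box m n → ℝ) : ip v u = ip u v :=
  Finset.sum_congr rfl fun g _ => mul_comm _ _

lemma ip_self_nonneg (v : Box m n → ℝ) : 0 ≤ ip v v :=
  Finset.sum_nonneg fun g _ => mul_self_nonneg _

lemma eq_zero_of_ip_self (v : Box m n → ℝ) (h : ip v v ≤ 0) : v = 0 := by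
  have h0 : ip v v = 0 := le_antisymm h (ip_self_nonneg v)
  funext g
  have := (Finset.sum_eq_zero_iff_of_nonneg (fun g _ => mul_self_nonneg (v g))).mp h0 g
    (Finset.mem_univ g)
  exact mul_self_eq_zero.mp this

lemma key_ineq (v : Box m n → ℝ) (w : ℕ) (hsupp : ∀ g : Box m n, v g ≠ 0 → wt g = w) :
    ip (Xop v) (Xop v) = ip (Yop v) (Yop v) + ((m : ℝ) * n - 2 * w) * ip v v := by
  have h1 : ip (Xop v) (Xop v) = ip v (Yop (Xop v)) := adj v (Xop v)
  have h2 : ip (Xop (Yop v)) v = ip (Yop v) (Yop v) := adj (Yop v) v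
  have h4 : ip (Xop (Yop v)) v - ip (Yop (Xop v)) v = (2 * (w : ℝ) - (m : ℝ) * n) * ip v v := by
    unfold ip
    rw [← Finset.sum_sub_distrib, Finset.mul_sum]
    refine Finset.sum_congr rfl fun g _ => ?_
    rw [← sub_mul, comm_apply v g]
    rcases eq_or_ne (v g) 0 with hg | hg
    · simp [hg]
    · rw [hsupp g hg]; ring
  have h5 : ip (Yop (Xop v)) v = ip v (Yop (Xop v)) := ip_comm _ _
  linarith

noncomputable def srt (f : Box m n) : Box m n :=
  ((f ∘ ⇑Fin.revPerm) ∘ ⇑(Tuple.sort (f ∘ ⇑Fin.revPerm))) ∘ ⇑Fin.revPerm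

lemma srt_eq_comp (f : Box m n) : ∃ π : Equiv.Perm (Fin m), srt f = f ∘ ⇑π :=
  ⟨Fin.revPerm.trans ((Tuple.sort (f ∘ ⇑Fin.revPerm)).trans Fin.revPerm), rfl⟩

lemma wt_srt (f : Box m n) : wt (srt f) = wt f := by
  obtain ⟨π, hπ⟩ := srt_eq_comp f
  rw [hπ, wt_comp_perm]

lemma srt_antitone (f : Box m n) : ∀ i j : Fin m, i ≤ j → srt f j ≤ srt f i := by
  intro i j hij
  exact Tuple.monotone_sort (f ∘ ⇑Fin.revPerm) (Fin.rev_le_rev.mpr hij)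

lemma srt_comp_perm (f : Box m n) (σ : Equiv.Perm (Fin m)) : srt (f ∘ ⇑σ) = srt f := by
  have h : (f ∘ ⇑σ) ∘ ⇑Fin.revPerm
      = (f ∘ ⇑Fin.revPerm) ∘ ⇑((Fin.revPerm.trans σ).trans Fin.revPerm) := by
    funext x
    simp [Fin.rev_rev]
  unfold srt
  rw [h, Tuple.comp_perm_comp_sort_eq_comp_sort]

lemma srt_of_antitone (f : Box m n) (hf : ∀ i j : Fin m, i ≤ j → f j ≤ f i) : srt f = f := by
  have hm : Monotone (f ∘ ⇑Fin.revPerm) := fun a b hab => hf _ _ (Fin.rev_le_rev.mpr hab)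
  unfold srt
  rw [Tuple.sort_eq_refl_iff_monotone.mpr hm]
  funext x
  simp [Fin.rev_rev]

def SP (m n w : ℕ) : Finset (Box m n) :=
  Finset.univ.filter fun f : Box m n =>
    (∀ i j : Fin m, i ≤ j → f j ≤ f i) ∧ ∑ i, (f i : ℕ) = w

lemma mem_SP {w : ℕ} {f : Box m n} :
    f ∈ SP m n w ↔ (∀ i j : Fin m, i ≤ j → f j ≤ f i) ∧ wt f = w := by
  simp [SP, wt]

noncomputable def phi (m n w : ℕ) (u : ↥(SP m n w) → ℝ) : Box m n → ℝ :=
  fun f =>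
    if h : wt f = w then
      u ⟨srt f, mem_SP.mpr ⟨srt_antitone f, by rw [wt_srt, h]⟩⟩
    else 0

lemma phi_comp_perm (w : ℕ) (u : ↥(SP m n w) → ℝ) (σ : Equiv.Perm (Fin m)) (f : Box m n) :
    phi m n w u (f ∘ ⇑σ) = phi m n w u f := by
  unfold phi
  have h1 : wt (f ∘ ⇑σ) = wt f := wt_comp_perm f σ
  rcases eq_or_ne (wt f) w with h | h
  · rw [dif_pos (h1.trans h), dif_pos h]
    exact congrArg u (Subtype.ext (srt_comp_perm f σ))
  · rw [dif_neg (by rw [h1]; exact h), dif_neg h]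

lemma phi_supp (w : ℕ) (u : ↥(SP m n w) → ℝ) (f : Box m n) (hf : phi m n w u f ≠ 0) :
    wt f = w := by
  by_contra h
  exact hf (dif_neg h)

lemma phi_apply_mem (w : ℕ) (u : ↥(SP m n w) → ℝ) (p : ↥(SP m n w)) :
    phi m n w u ↑p = u p := by
  obtain ⟨hanti, hwt⟩ := mem_SP.mp p.2
  unfold phi
  rw [dif_pos hwt]
  exact congrArg u (Subtype.ext (srt_of_antitone _ hanti))

noncomputable def Tmap (m n r : ℕ) : (↥(SP m n (r - 1)) → ℝ) →ₗ[ℝ] (↥(SP m n r) → ℝ) where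
  toFun u := fun p => Xop (phi m n (r - 1) u) ↑p
  map_add' u u' := by
    funext p
    have hphi : phi m n (r-1) (u + u') = phi m n (r-1) u + phi m n (r-1) u' := by
      funext f
      unfold phi
      rcases eq_or_ne (wt f) (r-1) with h | h
      · simp [dif_pos h]
      · simp [dif_neg h]
    simp only [hphi, Pi.add_apply, Xop]
    rw [← Finset.sum_add_distrib]
    exact Finset.sum_congr rfl fun i _ => by simp [mul_add]
  map_smul' c u := by
    funext p
    have hphi : phi m n (r-1) (c • u) = c • phi m n (r-1) u := by
      funext f
      unfold phi
      rcases eq_or_ne (wt f) (r-1) with h | h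
      · simp [dif_pos h]
      · simp [dif_neg h]
    simp only [hphi, Pi.smul_apply, Xop, RingHom.id_apply, smul_eq_mul]
    rw [Finset.mul_sum]
    refine Finset.sum_congr rfl fun i _ => ?_
    show Real.sqrt _ * (c • phi m n (r-1) u) _ = c * (Real.sqrt _ * phi m n (r-1) u _)
    rw [Pi.smul_apply, smul_eq_mul]
    ring

theorem Tmap_injective (m n r : ℕ) (hr1 : 1 ≤ r) (hr2 : 2 * r ≤ m * n) :
    Function.Injective (Tmap m n r) := by
  rw [injective_iff_map_eq_zero]
  intro u hu
  set v := phi m n (r - 1) u with hv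
  have hsupp : ∀ f : Box m n, v f ≠ 0 → wt f = r - 1 := phi_supp (r-1) u
  have hinv : ∀ (σ : Equiv.Perm (Fin m)) (f : Box m n), v (f ∘ ⇑σ) = v f :=
    fun σ f => phi_comp_perm (r-1) u σ f
  have hXzero : Xop v = 0 := by
    funext g
    rcases eq_or_ne (wt g) r with hg | hg
    · obtain ⟨π, hπ⟩ := srt_eq_comp g
      have e1 : Xop v g = Xop v (srt g) := by
        rw [hπ]
        exact (Xop_comp_perm π v (fun f => hinv π f) g).symm
      have hmem : srt g ∈ SP m n r := mem_SP.mpr ⟨srt_antitone g, by rw [wt_srt, hg]⟩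
      have e2 : Xop v (srt g) = 0 := by
        have := congrFun hu ⟨srt g, hmem⟩
        simpa [Tmap] using this
      rw [e1, e2]
      rfl
    · have : Xop v g = 0 := Xop_supp v (r-1) hsupp g (by omega)
      rw [this]; rfl
  have hkey := key_ineq v (r - 1) hsupp
  rw [hXzero] at hkey
  have hz : ip (0 : Box m n → ℝ) (0 : Box m n → ℝ) = 0 := by simp [ip]
  rw [hz] at hkey
  have h1 : 0 ≤ ip (Yop v) (Yop v) := ip_self_nonneg _
  have h2 : 0 ≤ ip v v := ip_self_nonneg _
  have hcast : ((r - 1 : ℕ) : ℝ) = (r : ℝ) - 1 := by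
    push_cast [hr1]; ring
  have hmn : (2 * r : ℝ) ≤ (m : ℝ) * n := by exact_mod_cast hr2
  have hδ : (2 : ℝ) ≤ (m : ℝ) * n - 2 * ((r - 1 : ℕ) : ℝ) := by
    rw [hcast]; linarith
  have hvv : ip v v ≤ 0 := by nlinarith
  have hv0 : v = 0 := eq_zero_of_ip_self v hvv
  funext p
  have := phi_apply_mem (r-1) u p
  rw [← this, ← hv, hv0]
  rfl

end Syl


/-- `gaussP m n r` is the number of partitions of `r` into at most `m` parts,
each part of size at most `n` (the coefficient of `q^r` in the Gaussian
binomial coefficient `binom(m+n, m)_q`). -/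
def gaussP (m n r : ℕ) : ℕ :=
  (Finset.univ.filter fun f : Fin m → Fin (n + 1) =>
    (∀ i j : Fin m, i ≤ j → f j ≤ f i) ∧ ∑ i, (f i : ℕ) = r).card

/-- Sylvester's unimodality theorem. -/
theorem stmt3 (m n r : ℕ) (hr1 : 1 ≤ r) (hr2 : 2 * r ≤ m * n) :
    gaussP m n (r - 1) ≤ gaussP m n r := by
  have hinj := Syl.Tmap_injective m n r hr1 hr2
  have hle := LinearMap.finrank_le_finrank_of_injective hinj
  rw [Module.finrank_fintype_fun_eq_card, Module.finrank_fintype_fun_eq_card,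
    Fintype.card_coe, Fintype.card_coe] at hle
  exact hle
end

section
/- Let n ≥ 1 and let a_1 ≥ a_2 ≥ … ≥ a_n ≥ 0 be integers with N = a_1 + … + a_n, and let c_r denote the coefficient of q^r in the polynomial ∏_{i=1}^n (1 + q + … + q^{a_i}). Then c_{r−1} < c_r for all integers r with 1 ≤ r ≤ ⌊N/2⌋ if and only if a_1 ≤ a_2 + … + a_n + 1. (Criterion for strict unimodality of a product of chains.) -/
/-!
Write `A = [a]·B`, where `[a] = 1 + q + … + q^a` is the largest chain and `B` the product of the
others, of degree `S = N - a`. From `q·[a] + 1 = [a] + q^(a+1)` one gets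
`A_{r+1} - A_r = B_{r+1} - B_{r-a}`. Since `B` is symmetric and unimodal this difference is `≥ 0`
up to the middle; it vanishes or is negative as soon as `r + 1 > S` (then `B_{r+1} = 0`), and for
`r + 1 ≤ S` it is positive, by induction on the number of chains: `a` dominates the largest part of
`B`, so `B` is still strictly increasing at `r - a`. Hence strictness up to `⌊N/2⌋` is exactly
`⌊N/2⌋ ≤ S`, i.e. `a ≤ S + 1`.
-/

open Polynomial

noncomputable def chainPoly (a : ℕ) : ℕ[X] := ∑ j ∈ Finset.range (a + 1), X ^ j

noncomputable def chainProd (l : List ℕ) : ℕ[X] := (l.map chainPoly).prod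

@[simp]
lemma chainProd_nil : chainProd [] = 1 := rfl

@[simp]
lemma chainProd_cons (a : ℕ) (l : List ℕ) : chainProd (a :: l) = chainPoly a * chainProd l := rfl

lemma coeff_chainPoly (a i : ℕ) : (chainPoly a).coeff i = if i ≤ a then 1 else 0 := by
  simp [chainPoly, coeff_X_pow]

lemma natDegree_chainPoly_le (a : ℕ) : (chainPoly a).natDegree ≤ a :=
  natDegree_sum_le_of_forall_le _ _ fun j hj => by
    simpa [Nat.lt_succ_iff] using Finset.mem_range.mp hj

lemma natDegree_chainProd_le (l : List ℕ) : (chainProd l).natDegree ≤ l.sum := by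
  induction l with
  | nil => simp
  | cons a t ih =>
    simpa using natDegree_mul_le.trans (Nat.add_le_add (natDegree_chainPoly_le a) ih)

lemma coeff_chainProd_eq_zero_of_sum_lt {l : List ℕ} {r : ℕ} (h : l.sum < r) :
    (chainProd l).coeff r = 0 :=
  coeff_eq_zero_of_natDegree_lt ((natDegree_chainProd_le l).trans_lt h)

lemma reflect_chainPoly (a : ℕ) : reflect a (chainPoly a) = chainPoly a := by
  ext i
  rw [coeff_reflect, coeff_chainPoly, coeff_chainPoly]
  rcases le_or_gt i a with h | h
  · simp [revAt_le h, h]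
  · rw [revAt_eq_self_of_lt h]

lemma reflect_chainProd (l : List ℕ) : reflect l.sum (chainProd l) = chainProd l := by
  induction l with
  | nil => simp
  | cons a t ih =>
    rw [chainProd_cons, List.sum_cons,
      reflect_mul _ _ (natDegree_chainPoly_le a) (natDegree_chainProd_le t), reflect_chainPoly, ih]

lemma coeff_chainProd_sum_sub {l : List ℕ} {r : ℕ} (h : r ≤ l.sum) :
    (chainProd l).coeff (l.sum - r) = (chainProd l).coeff r := by
  conv_lhs => rw [← reflect_chainProd l]
  rw [coeff_reflect, revAt_le (Nat.sub_le _ _), Nat.sub_sub_self h]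

lemma coeff_chainProd_pos {l : List ℕ} {r : ℕ} (h : r ≤ l.sum) : 0 < (chainProd l).coeff r := by
  induction l generalizing r with
  | nil => simp_all
  | cons a t ih =>
    rw [List.sum_cons] at h
    have hmem : (r - min r t.sum, min r t.sum) ∈ Finset.HasAntidiagonal.antidiagonal r :=
      Finset.HasAntidiagonal.mem_antidiagonal.mpr (Nat.sub_add_cancel (min_le_left _ _))
    have hterm : 0 < (chainPoly a).coeff (r - min r t.sum) * (chainProd t).coeff (min r t.sum) := by
      rw [coeff_chainPoly, if_pos (by omega), one_mul]
      exact ih (min_le_right _ _)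
    rw [chainProd_cons, coeff_mul]
    exact hterm.trans_le (Finset.single_le_sum
      (f := fun x => (chainPoly a).coeff x.1 * (chainProd t).coeff x.2) (fun _ _ => Nat.zero_le _) hmem)

lemma chainPoly_mul_X_add_one (a : ℕ) : chainPoly a * X + 1 = chainPoly a + X ^ (a + 1) := by
  have h := Finset.sum_range_succ' (fun j => (X : ℕ[X]) ^ j) (a + 1)
  rw [Finset.sum_range_succ] at h
  simp only [chainPoly, Finset.sum_mul, ← pow_succ]
  exact h.symm

lemma coeff_chainProd_cons_add_coeff_succ (a : ℕ) (t : List ℕ) (r : ℕ) :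
    (chainProd (a :: t)).coeff r + (chainProd t).coeff (r + 1) =
      (chainProd (a :: t)).coeff (r + 1) + if a ≤ r then (chainProd t).coeff (r - a) else 0 := by
  have h := congrArg (coeff · (r + 1)) (congrArg (· * chainProd t) (chainPoly_mul_X_add_one a))
  simp only [add_mul, one_mul, mul_right_comm _ X, coeff_add, coeff_mul_X, coeff_X_pow_mul'] at h
  simpa [Nat.add_sub_add_right] using h

lemma le_of_symm_of_le_succ {α : Type*} [Preorder α] {f : ℕ → α} {N : ℕ}
    (hsymm : ∀ i ≤ N, f (N - i) = f i) (hstep : ∀ r, 2 * (r + 1) ≤ N → f r ≤ f (r + 1))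
    {i j : ℕ} (hij : i ≤ j) (hN : i + j ≤ N) : f i ≤ f j := by
  have hmono : ∀ k, i ≤ k → 2 * k ≤ N → f i ≤ f k := by
    refine Nat.le_induction (fun _ => le_rfl) fun k _ ih hk => ?_
    exact (ih (by omega)).trans (hstep k hk)
  rcases le_or_gt (2 * j) N with h | h
  · exact hmono j hij h
  · rw [← hsymm j (by omega)]
    exact hmono (N - j) (by omega) (by omega)

lemma coeff_chainProd_mono (l : List ℕ) {i j : ℕ} (hij : i ≤ j) (hN : i + j ≤ l.sum) :
    (chainProd l).coeff i ≤ (chainProd l).coeff j := by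
  induction l generalizing i j with
  | nil => rw [show i = j by simp at hN; omega]
  | cons a t ih =>
    refine le_of_symm_of_le_succ (fun _ => coeff_chainProd_sum_sub) (fun r hr => ?_) hij hN
    have hid := coeff_chainProd_cons_add_coeff_succ a t r
    have hle : (if a ≤ r then (chainProd t).coeff (r - a) else 0) ≤ (chainProd t).coeff (r + 1) := by
      split_ifs with har
      · exact ih (by omega) (by simp at hr; omega)
      · exact Nat.zero_le _
    omega

lemma coeff_chainProd_cons_succ_le {a : ℕ} {t : List ℕ} {r : ℕ} (h : t.sum < r + 1) :
    (chainProd (a :: t)).coeff (r + 1) ≤ (chainProd (a :: t)).coeff r := by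
  have hid := coeff_chainProd_cons_add_coeff_succ a t r
  rw [coeff_chainProd_eq_zero_of_sum_lt h] at hid
  omega

lemma coeff_chainProd_cons_lt_succ {a : ℕ} {t : List ℕ} (hsort : (a :: t).Pairwise (· ≥ ·))
    {r : ℕ} (hmid : 2 * (r + 1) ≤ a + t.sum) (hr : r + 1 ≤ t.sum) :
    (chainProd (a :: t)).coeff r < (chainProd (a :: t)).coeff (r + 1) := by
  induction t generalizing a r with
  | nil => simp at hr
  | cons b t ih =>
    have hid := coeff_chainProd_cons_add_coeff_succ a (b :: t) r
    have hlt : (if a ≤ r then (chainProd (b :: t)).coeff (r - a) else 0) <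
        (chainProd (b :: t)).coeff (r + 1) := by
      split_ifs with har
      · have hba : b ≤ a := List.rel_of_pairwise_cons hsort List.mem_cons_self
        simp only [List.sum_cons] at hmid hr
        calc (chainProd (b :: t)).coeff (r - a)
            < (chainProd (b :: t)).coeff (r - a + 1) :=
              ih hsort.of_cons (by omega) (by omega)
          _ ≤ (chainProd (b :: t)).coeff (r + 1) :=
              coeff_chainProd_mono _ (by omega) (by simp; omega)
      · exact coeff_chainProd_pos hr
    omega

open Polynomial in
/-- Criterion for strict unimodality of a product of chains
`[a 0] × … × [a (n-1)]` with `a 0 ≥ a 1 ≥ … ≥ a (n-1) ≥ 0`. -/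
theorem stmt4 (n : ℕ) (hn : 0 < n) (a : Fin n → ℕ)
    (ha : ∀ i j : Fin n, i ≤ j → a j ≤ a i) :
    (∀ r : ℕ, 1 ≤ r → 2 * r ≤ ∑ i, a i →
      (∏ i, ∑ j ∈ Finset.range (a i + 1), (X : Polynomial ℕ) ^ j).coeff (r - 1) <
        (∏ i, ∑ j ∈ Finset.range (a i + 1), (X : Polynomial ℕ) ^ j).coeff r) ↔
    a ⟨0, hn⟩ ≤ (∑ i ∈ Finset.univ.erase ⟨0, hn⟩, a i) + 1 := by
  obtain ⟨m, rfl⟩ := Nat.exists_eq_add_one_of_ne_zero hn.ne'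
  set t := List.ofFn fun i : Fin m => a i.succ
  have hprod : ∏ i, ∑ j ∈ Finset.range (a i + 1), (X : ℕ[X]) ^ j = chainProd (a 0 :: t) := by
    rw [chainProd, ← List.ofFn_succ, List.map_ofFn, List.prod_ofFn]; rfl
  have hsort : (a 0 :: t).Pairwise (· ≥ ·) := by
    rw [← List.ofFn_succ, List.pairwise_ofFn]
    exact fun i j hij => ha i j hij.le
  have hsum : ∑ i, a i = a 0 + t.sum := by rw [Fin.sum_univ_succ, List.sum_ofFn]
  have herase : ∑ i ∈ Finset.univ.erase 0, a i = t.sum := by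
    have := Finset.add_sum_erase _ a (Finset.mem_univ 0)
    omega
  rw [Fin.zero_eta, herase, hprod, hsum]
  constructor
  · intro h
    by_contra! hbig
    have := h (t.sum + 1) le_add_self (by omega)
    exact (coeff_chainProd_cons_succ_le (a := a 0) (lt_add_one t.sum)).not_gt this
  · rintro h (_ | r) hr hmid
    · omega
    · exact coeff_chainProd_cons_lt_succ hsort hmid (by omega)
end

section
/- Let n ≥ 1 and let a_1 ≥ a_2 ≥ … ≥ a_n ≥ 0 be integers with N = a_1 + … + a_n, and let c_r denote the coefficient of q^r in ∏_{i=1}^n (1 + q + … + q^{a_i}). Then c_{r−1} < c_r for all integers r with 1 ≤ r ≤ min(a_2 + … + a_n, ⌊N/2⌋). (A product of chains is strictly unimodal from rank 0 up to the lowest rank of a shortest chain in a symmetric chain decomposition.) -/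
open Polynomial Finset

private noncomputable def pp (a : ℕ) : Polynomial ℕ := ∑ j ∈ range (a+1), X ^ j

private noncomputable def PP : List ℕ → Polynomial ℕ
  | [] => 1
  | a :: t => pp a * PP t

private lemma pp_coeff (a k : ℕ) : (pp a).coeff k = if k ≤ a then 1 else 0 := by
  simp only [pp, finset_sum_coeff, coeff_X_pow]
  rw [Finset.sum_ite_eq (range (a+1)) k (fun _ => (1:ℕ))]
  simp [Nat.lt_succ_iff]

private lemma pp_natDegree_le (a : ℕ) : (pp a).natDegree ≤ a := by
  apply Polynomial.natDegree_sum_le_of_forall_le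
  intro j hj
  simpa using Nat.lt_succ_iff.mp (Finset.mem_range.mp hj)

private lemma PP_natDegree_le (l : List ℕ) : (PP l).natDegree ≤ l.sum := by
  induction l with
  | nil => simp [PP]
  | cons a t ih =>
    calc (PP (a :: t)).natDegree ≤ (pp a).natDegree + (PP t).natDegree :=
          Polynomial.natDegree_mul_le
      _ ≤ a + t.sum := Nat.add_le_add (pp_natDegree_le a) ih
      _ = (a :: t).sum := by simp

private lemma pp_reflect (a : ℕ) : (pp a).reflect a = pp a := by
  ext k
  rw [coeff_reflect, pp_coeff, pp_coeff]
  by_cases h : k ≤ a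
  · rw [revAt_le h, if_pos (Nat.sub_le a k), if_pos h]
  · rw [revAt_eq_self_of_lt (by omega)]

private lemma PP_reflect (l : List ℕ) : (PP l).reflect l.sum = PP l := by
  induction l with
  | nil => simp [PP]
  | cons a t ih =>
    show (pp a * PP t).reflect (a + t.sum) = pp a * PP t
    rw [reflect_mul (pp a) (PP t) (pp_natDegree_le a) (PP_natDegree_le t),
      pp_reflect, ih]

private lemma PP_symm (l : List ℕ) {j : ℕ} (hj : j ≤ l.sum) :
    (PP l).coeff j = (PP l).coeff (l.sum - j) := by
  conv_lhs => rw [← PP_reflect l]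
  rw [coeff_reflect, revAt_le hj]

private lemma PP_coeff_cons (a : ℕ) (t : List ℕ) (n : ℕ) :
    (PP (a :: t)).coeff n
      = ∑ k ∈ range (n+1), (if k ≤ a then (PP t).coeff (n - k) else 0) := by
  show (pp a * PP t).coeff n = _
  rw [Polynomial.coeff_mul, Finset.Nat.sum_antidiagonal_eq_sum_range_succ
    (fun x y => (pp a).coeff x * (PP t).coeff y)]
  apply Finset.sum_congr rfl
  intro k _
  rw [pp_coeff]
  split <;> simp

private lemma PP_coeff_pos (l : List ℕ) {j : ℕ} (hj : j ≤ l.sum) :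
    0 < (PP l).coeff j := by
  induction l generalizing j with
  | nil =>
    simp only [List.sum_nil, Nat.le_zero] at hj
    simp [PP, hj]
  | cons a t ih =>
    rw [PP_coeff_cons]
    have hsum : j ≤ a + t.sum := by simpa using hj
    set k0 := j - min j t.sum with hk0
    have h1 : k0 ≤ a := by omega
    have h2 : j - k0 ≤ t.sum := by omega
    have hmem : k0 ∈ range (j+1) := Finset.mem_range.mpr (by omega)
    calc 0 < (PP t).coeff (j - k0) := ih h2
      _ = (if k0 ≤ a then (PP t).coeff (j - k0) else 0) := by rw [if_pos h1]
      _ ≤ _ := Finset.single_le_sum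
          (f := fun k => if k ≤ a then (PP t).coeff (j - k) else 0)
          (fun i _ => Nat.zero_le _) hmem

/-- key coefficient identity -/
private lemma key (a : ℕ) (t : List ℕ) {r : ℕ} (hr : 1 ≤ r) :
    (PP (a :: t)).coeff r + (if a < r then (PP t).coeff (r - 1 - a) else 0)
      = (PP (a :: t)).coeff (r - 1) + (PP t).coeff r := by
  have hr' : r - 1 + 1 = r := by omega
  have e1 : (PP (a :: t)).coeff r
      = (∑ k ∈ range r, if k + 1 ≤ a then (PP t).coeff (r - (k+1)) else 0)
        + (PP t).coeff r := by
    rw [PP_coeff_cons,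
      Finset.sum_range_succ' (fun k => if k ≤ a then (PP t).coeff (r - k) else 0) r]
    simp
  have split : ∀ k ∈ range r, (if k ≤ a then (PP t).coeff (r - 1 - k) else 0)
      = (if k + 1 ≤ a then (PP t).coeff (r - (k+1)) else 0)
        + (if k = a then (PP t).coeff (r - 1 - a) else 0) := by
    intro k _
    have hh : r - (k+1) = r - 1 - k := by omega
    rw [hh]
    rcases Nat.lt_trichotomy k a with h | h | h
    · rw [if_pos h.le, if_pos (by omega), if_neg (by omega), add_zero]
    · subst h; rw [if_pos le_rfl, if_neg (by omega), if_pos rfl, zero_add]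
    · rw [if_neg (by omega), if_neg (by omega), if_neg (by omega), add_zero]
  have e2 : (PP (a :: t)).coeff (r - 1)
      = (∑ k ∈ range r, if k + 1 ≤ a then (PP t).coeff (r - (k+1)) else 0)
        + (if a < r then (PP t).coeff (r - 1 - a) else 0) := by
    rw [PP_coeff_cons, hr', Finset.sum_congr rfl split, Finset.sum_add_distrib,
      Finset.sum_ite_eq' (range r) a (fun _ => (PP t).coeff (r - 1 - a))]
    simp only [Finset.mem_range]
  rw [e1, e2]
  ring

private lemma chain_mono (c : ℕ → ℕ) (M : ℕ)
    (h : ∀ r, 1 ≤ r → 2*r ≤ M → c (r-1) ≤ c r) :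
    ∀ k, 2*k ≤ M → ∀ j, j ≤ k → c j ≤ c k := by
  intro k
  induction k with
  | zero =>
    intro _ j hj
    have : j = 0 := by omega
    rw [this]
  | succ k ih =>
    intro h2 j hj
    rcases Nat.lt_or_ge j (k+1) with h' | h'
    · exact (ih (by omega) j (by omega)).trans (by simpa using h (k+1) (by omega) h2)
    · have : j = k + 1 := by omega
      rw [this]

private lemma PP_mono (l : List ℕ) :
    ∀ r, 1 ≤ r → 2*r ≤ l.sum → (PP l).coeff (r-1) ≤ (PP l).coeff r := by
  induction l with
  | nil => intro r h1 h2; simp at h2; omega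
  | cons a t ih =>
    intro r h1 h2
    have hsum : 2*r ≤ a + t.sum := by simpa using h2
    have hkey := key a t h1
    have hdrop : (if a < r then (PP t).coeff (r - 1 - a) else 0) ≤ (PP t).coeff r := by
      split
      · rename_i har
        have hrM : r < t.sum := by omega
        have h2t0 : 2 * (min r (t.sum - r)) ≤ t.sum := by omega
        have hst0 : r - 1 - a ≤ min r (t.sum - r) := by omega
        have step1 : (PP t).coeff (r - 1 - a) ≤ (PP t).coeff (min r (t.sum - r)) :=
          chain_mono (fun k => (PP t).coeff k) t.sum ih _ h2t0 _ hst0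
        have step2 : (PP t).coeff (min r (t.sum - r)) = (PP t).coeff r := by
          rcases Nat.le_total r (t.sum - r) with h | h
          · rw [min_eq_left h]
          · rw [min_eq_right h]
            exact (PP_symm t hrM.le).symm
        omega
      · exact Nat.zero_le _
    omega

private lemma PP_strict (l : List ℕ) (hl : l.Chain' (fun x y => y ≤ x)) :
    ∀ r, 1 ≤ r → r ≤ l.tail.sum → 2*r ≤ l.sum → (PP l).coeff (r-1) < (PP l).coeff r := by
  induction l with
  | nil => intro r h1 h2 _; simp at h2; omega
  | cons a t ih =>
    intro r h1 h2 h3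
    simp only [List.tail_cons] at h2
    have hsum : 2*r ≤ a + t.sum := by simpa using h3
    have hkey := key a t h1
    have hdrop : (if a < r then (PP t).coeff (r - 1 - a) else 0) < (PP t).coeff r := by
      split
      · rename_i har
        -- t is nonempty
        rcases t with _ | ⟨b, t'⟩
        · simp at h2; omega
        have hba : b ≤ a := (List.isChain_cons_cons.mp hl).1
        have ht' : (b :: t').Chain' (fun x y => y ≤ x) := (List.isChain_cons_cons.mp hl).2
        have hM : r ≤ b + t'.sum := by simpa using h2
        have hds : (b :: t').sum = b + t'.sum := by simp
        rw [hds] at hsum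
        have hstrict : (PP (b :: t')).coeff (r - a - 1) < (PP (b :: t')).coeff (r - a) :=
          ih ht' (r - a) (by omega) (by simp only [List.tail_cons]; omega)
            (by simp only [List.sum_cons]; omega)
        set M := b + t'.sum with hMdef
        have hMs : (b :: t').sum = M := by simp [hMdef]
        have heq : r - 1 - a = r - a - 1 := by omega
        have h2t0 : 2 * (min r (M - r)) ≤ M := by omega
        have hst0 : r - a ≤ min r (M - r) := by omega
        have step1 : (PP (b :: t')).coeff (r - a) ≤ (PP (b :: t')).coeff (min r (M - r)) :=
          chain_mono (fun k => (PP (b :: t')).coeff k) M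
            (by rw [← hMs]; exact PP_mono (b :: t')) _ h2t0 _ hst0
        have step2 : (PP (b :: t')).coeff (min r (M - r)) = (PP (b :: t')).coeff r := by
          rcases Nat.le_total r (M - r) with h | h
          · rw [min_eq_left h]
          · rw [min_eq_right h]
            have := PP_symm (b :: t') (j := r) (by omega)
            rw [hMs] at this
            exact this.symm
        rw [heq]
        omega
      · exact PP_coeff_pos t h2
    omega

private lemma PP_ofFn : ∀ (n : ℕ) (a : Fin n → ℕ),
    PP (List.ofFn a) = ∏ i, pp (a i) := by
  intro n a
  rw [← List.prod_ofFn]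
  induction n with
  | zero => simp [PP]
  | succ m ih =>
    rw [List.ofFn_succ, List.ofFn_succ]
    show PP _ = _
    rw [show PP (a 0 :: List.ofFn fun i => a i.succ)
        = pp (a 0) * PP (List.ofFn fun i => a i.succ) from rfl]
    rw [ih (fun i => a i.succ)]
    simp

open Polynomial in
/-- A product of chains is strictly unimodal from rank `0` up to the lowest
rank of a shortest chain in a symmetric chain decomposition. -/
theorem stmt5 (n : ℕ) (hn : 0 < n) (a : Fin n → ℕ)
    (ha : ∀ i j : Fin n, i ≤ j → a j ≤ a i)
    (r : ℕ) (hr1 : 1 ≤ r) (hr2 : r ≤ ∑ i ∈ Finset.univ.erase ⟨0, hn⟩, a i)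
    (hr3 : 2 * r ≤ ∑ i, a i) :
    (∏ i, ∑ j ∈ Finset.range (a i + 1), (X : Polynomial ℕ) ^ j).coeff (r - 1) <
      (∏ i, ∑ j ∈ Finset.range (a i + 1), (X : Polynomial ℕ) ^ j).coeff r := by
  have hprod : (∏ i, ∑ j ∈ Finset.range (a i + 1), (X : Polynomial ℕ) ^ j)
      = PP (List.ofFn a) := by
    rw [PP_ofFn]
    rfl
  rw [hprod]
  apply PP_strict (List.ofFn a)
  · exact List.Pairwise.isChain (List.pairwise_ofFn.mpr (fun i j hij => ha i j hij.le))
  · exact hr1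
  · -- tail sum
    obtain ⟨m, rfl⟩ := Nat.exists_eq_succ_of_ne_zero hn.ne'
    have htail : (List.ofFn a).tail = List.ofFn (fun i : Fin m => a i.succ) := by
      rw [List.ofFn_succ]; rfl
    rw [htail, List.sum_ofFn]
    have h1 : a ⟨0, hn⟩ + ∑ i ∈ Finset.univ.erase ⟨0, hn⟩, a i = ∑ i, a i :=
      Finset.add_sum_erase _ a (Finset.mem_univ _)
    have h2' : ∑ i, a i = a ⟨0, hn⟩ + ∑ i : Fin m, a i.succ := Fin.sum_univ_succ a
    omega
  · rw [List.sum_ofFn]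
    exact hr3
end

section
/- Let m ≥ 8 and n ≥ 24 be integers and let N_3(m,n) be the number of triples (d_0, d_1, d_2) of positive integers with d_0 + 2d_1 + 3d_2 = n and m·d_0 ≤ (m−4)·d_2 + 1. Then 2·N_3(m,n) ≥ n − 16. -/
/-- Triples with the m-free sufficient condition `2*a ≤ c`. -/
def F (n : ℕ) : Finset (ℕ × ℕ × ℕ) :=
  (Finset.range (n+1) ×ˢ Finset.range (n+1) ×ˢ Finset.range (n+1)).filter
    (fun t => 0 < t.1 ∧ 0 < t.2.1 ∧ 0 < t.2.2 ∧
      t.1 + 2 * t.2.1 + 3 * t.2.2 = n ∧ 2 * t.1 ≤ t.2.2)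

lemma mem_F {n : ℕ} {t : ℕ × ℕ × ℕ} :
    t ∈ F n ↔ 0 < t.1 ∧ 0 < t.2.1 ∧ 0 < t.2.2 ∧
      t.1 + 2 * t.2.1 + 3 * t.2.2 = n ∧ 2 * t.1 ≤ t.2.2 := by
  simp only [F, Finset.mem_filter, Finset.mem_product, Finset.mem_range]
  omega

def shift3 : ℕ × ℕ × ℕ → ℕ × ℕ × ℕ := fun t => (t.1, t.2.1 + 3, t.2.2)

lemma shift3_inj : Function.Injective shift3 := by
  rintro ⟨a1, a2, a3⟩ ⟨b1, b2, b3⟩ h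
  simp only [shift3, Prod.mk.injEq] at h ⊢
  omega

lemma shift3_mem {n : ℕ} {t : ℕ × ℕ × ℕ} (h : t ∈ F n) : shift3 t ∈ F (n + 6) := by
  rw [mem_F] at h ⊢
  simp only [shift3]
  omega

def newel (n b : ℕ) : ℕ × ℕ × ℕ :=
  (if (n - 2*b) % 3 = 0 then 3 else (n - 2*b) % 3, b,
   ((n - 2*b) - (if (n - 2*b) % 3 = 0 then 3 else (n - 2*b) % 3)) / 3)

lemma newel_snd (n b : ℕ) : (newel n b).2.1 = b := rfl

lemma newel_mem {n b : ℕ} (hb : 0 < b) (h : 2*b + 21 ≤ n) : newel n b ∈ F n := by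
  rw [mem_F]
  simp only [newel]
  split_ifs with h3 <;> omega

lemma base_helper (n k : ℕ) (E : Finset (ℕ × ℕ × ℕ)) (hsub : E ⊆ F n)
    (hcard : k ≤ E.card) (hk : n ≤ 2*k+16) : n ≤ 2 * (F n).card + 16 := by
  have := Finset.card_le_card hsub; omega

lemma F_lb : ∀ n, 24 ≤ n → n ≤ 2 * (F n).card + 16 := by
  intro n
  induction n using Nat.strong_induction_on with
  | _ n ih =>
    intro hn
    by_cases h30 : n < 30
    · interval_cases n
      · refine base_helper 24 4 {(1,7,3),(1,4,5),(1,1,7),(2,5,4)} ?_ (by decide) (by norm_num)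
        intro t ht
        rw [mem_F]
        simp only [Finset.mem_insert, Finset.mem_singleton] at ht
        rcases ht with rfl|rfl|rfl|rfl <;> decide
      · refine base_helper 25 5 {(1,9,2),(1,6,4),(1,3,6),(2,4,5),(2,1,7)} ?_ (by decide) (by norm_num)
        intro t ht
        rw [mem_F]
        simp only [Finset.mem_insert, Finset.mem_singleton] at ht
        rcases ht with rfl|rfl|rfl|rfl|rfl <;> decide
      · refine base_helper 26 5 {(1,8,3),(1,5,5),(1,2,7),(2,6,4),(2,3,6)} ?_ (by decide) (by norm_num)
        intro t ht
        rw [mem_F]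
        simp only [Finset.mem_insert, Finset.mem_singleton] at ht
        rcases ht with rfl|rfl|rfl|rfl|rfl <;> decide
      · refine base_helper 27 6 {(1,10,2),(1,7,4),(1,4,6),(1,1,8),(2,5,5),(2,2,7)} ?_ (by decide) (by norm_num)
        intro t ht
        rw [mem_F]
        simp only [Finset.mem_insert, Finset.mem_singleton] at ht
        rcases ht with rfl|rfl|rfl|rfl|rfl|rfl <;> decide
      · refine base_helper 28 6 {(1,9,3),(1,6,5),(1,3,7),(2,7,4),(2,4,6),(2,1,8)} ?_ (by decide) (by norm_num)
        intro t ht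
        rw [mem_F]
        simp only [Finset.mem_insert, Finset.mem_singleton] at ht
        rcases ht with rfl|rfl|rfl|rfl|rfl|rfl <;> decide
      · refine base_helper 29 7 {(1,11,2),(1,8,4),(1,5,6),(1,2,8),(2,6,5),(2,3,7),(3,4,6)} ?_ (by decide) (by norm_num)
        intro t ht
        rw [mem_F]
        simp only [Finset.mem_insert, Finset.mem_singleton] at ht
        rcases ht with rfl|rfl|rfl|rfl|rfl|rfl|rfl <;> decide
    · push_neg at h30
      have ih6 := ih (n - 6) (by omega) (by omega)
      -- the shifted image
      set G := (F (n - 6)).image shift3 with hG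
      have himg : G ⊆ F n := by
        intro t ht
        rw [hG, Finset.mem_image] at ht
        obtain ⟨s, hs, rfl⟩ := ht
        have := shift3_mem hs
        rwa [show n - 6 + 6 = n by omega] at this
      have hGcard : G.card = (F (n - 6)).card := Finset.card_image_of_injective _ shift3_inj
      have hGsnd : ∀ t ∈ G, 4 ≤ t.2.1 := by
        intro t ht
        rw [hG, Finset.mem_image] at ht
        obtain ⟨s, hs, rfl⟩ := ht
        have := (mem_F.mp hs).2.1
        simp only [shift3]
        omega
      have h1 : newel n 1 ∈ F n := newel_mem one_pos (by omega)
      have h2 : newel n 2 ∈ F n := newel_mem (by norm_num) (by omega)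
      have h3 : newel n 3 ∈ F n := newel_mem (by norm_num) (by omega)
      set E := insert (newel n 1) (insert (newel n 2) (insert (newel n 3) G)) with hE
      have hEsub : E ⊆ F n := by
        intro t ht
        rw [hE] at ht
        simp only [Finset.mem_insert] at ht
        rcases ht with rfl|rfl|rfl|ht
        · exact h1
        · exact h2
        · exact h3
        · exact himg ht
      have hn3 : newel n 3 ∉ G := by
        intro h
        have := hGsnd _ h
        rw [newel_snd] at this
        omega
      have hn2 : newel n 2 ∉ insert (newel n 3) G := by
        intro h
        rcases Finset.mem_insert.mp h with h | h
        · have := congrArg (fun t => t.2.1) h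
          simp only [newel_snd] at this
          omega
        · have := hGsnd _ h
          rw [newel_snd] at this
          omega
      have hn1 : newel n 1 ∉ insert (newel n 2) (insert (newel n 3) G) := by
        intro h
        rcases Finset.mem_insert.mp h with h | h
        · have := congrArg (fun t => t.2.1) h
          simp only [newel_snd] at this
          omega
        · rcases Finset.mem_insert.mp h with h | h
          · have := congrArg (fun t => t.2.1) h
            simp only [newel_snd] at this
            omega
          · have := hGsnd _ h
            rw [newel_snd] at this
            omega
      have hEcard : E.card = (F (n - 6)).card + 3 := by
        rw [hE, Finset.card_insert_of_notMem hn1, Finset.card_insert_of_notMem hn2,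
          Finset.card_insert_of_notMem hn3, hGcard]
      have := Finset.card_le_card hEsub
      omega

lemma mcond {m a c : ℕ} (hm : 8 ≤ m) (h : 2 * a ≤ c) : m * a ≤ (m - 4) * c + 1 := by
  obtain ⟨k, rfl⟩ : ∃ k, m = k + 8 := ⟨m - 8, by omega⟩
  rw [show k + 8 - 4 = k + 4 by omega]
  have h2 := Nat.mul_le_mul_left (k + 4) h
  nlinarith

theorem stmt10 (m n : ℕ) (hm : 8 ≤ m) (hn : 24 ≤ n) :
    n ≤ 2 * Set.ncard {t : ℕ × ℕ × ℕ | 0 < t.1 ∧ 0 < t.2.1 ∧ 0 < t.2.2 ∧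
        t.1 + 2 * t.2.1 + 3 * t.2.2 = n ∧ m * t.1 ≤ (m - 4) * t.2.2 + 1} + 16 := by
  classical
  set F' : Finset (ℕ × ℕ × ℕ) :=
    (Finset.range (n+1) ×ˢ Finset.range (n+1) ×ˢ Finset.range (n+1)).filter
      (fun t => 0 < t.1 ∧ 0 < t.2.1 ∧ 0 < t.2.2 ∧
        t.1 + 2 * t.2.1 + 3 * t.2.2 = n ∧ m * t.1 ≤ (m - 4) * t.2.2 + 1) with hF'
  have hset : {t : ℕ × ℕ × ℕ | 0 < t.1 ∧ 0 < t.2.1 ∧ 0 < t.2.2 ∧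
      t.1 + 2 * t.2.1 + 3 * t.2.2 = n ∧ m * t.1 ≤ (m - 4) * t.2.2 + 1} = ↑F' := by
    ext t
    simp only [hF', Set.mem_setOf_eq, Finset.coe_filter, Finset.mem_product,
      Finset.mem_range, Set.mem_setOf_eq]
    constructor
    · rintro ⟨h1, h2, h3, h4, h5⟩
      exact ⟨⟨by omega, by omega, by omega⟩, h1, h2, h3, h4, h5⟩
    · rintro ⟨-, h⟩
      exact h
  rw [hset, Set.ncard_coe_finset]
  have hsub : F n ⊆ F' := by
    intro t ht
    rw [mem_F] at ht
    rw [hF', Finset.mem_filter]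
    refine ⟨?_, ht.1, ht.2.1, ht.2.2.1, ht.2.2.2.1, mcond hm ht.2.2.2.2⟩
    simp only [Finset.mem_product, Finset.mem_range]
    omega
  have := Finset.card_le_card hsub
  have := F_lb n hn
  omega
end

section
/- Let m, n be positive integers and k = ⌊m/2⌋. Every partition λ fitting in the m×n box belongs to Q_m(d_0,…,d_k) for exactly one tuple (d_0,…,d_k) of nonnegative integers satisfying ∑_{j=0}^k (j+1)d_j = n. (The sets Q_m(d_0,…,d_k) partition the underlying ranked set of L(m,n); this is the decomposition part of O'Hara's structure theorem.) -/
/-- `l : ℕ → ℕ` encodes a partition fitting in the `m × n` box, extended by the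
conventions `λ_0 = n` and `λ_i = 0` for `i > m`. -/
def InBox (m n : ℕ) (l : ℕ → ℕ) : Prop :=
  l 0 = n ∧ (∀ i, m < i → l i = 0) ∧ ∀ i, l (i + 1) ≤ l i

/-- `fmr m r l = min { ∑_{j=0}^{m-2r} a_{2 t_j + j} : 0 ≤ t_0 ≤ … ≤ t_{m-2r} ≤ r }`,
where `a_i = λ_i − λ_{i+1}`. -/
noncomputable def fmr (m r : ℕ) (l : ℕ → ℕ) : ℕ :=
  sInf { S | ∃ t : Fin (m - 2 * r + 1) → ℕ,
    (∀ i j, i ≤ j → t i ≤ t j) ∧ (∀ i, t i ≤ r) ∧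
    S = ∑ j, (l (2 * t j + (j : ℕ)) - l (2 * t j + (j : ℕ) + 1)) }

/-- Membership in O'Hara's set `Q_m(d_0, …, d_k)`, where `k = ⌊m/2⌋`. -/
def InQ (m n : ℕ) (d : Fin (m / 2 + 1) → ℕ) (l : ℕ → ℕ) : Prop :=
  InBox m n l ∧ ∀ r, 1 ≤ r → r ≤ m / 2 →
    fmr m r l = ∑ j : Fin (m / 2 + 1), ((j : ℕ) + 1 - r) * d j

/-- The size `|λ| = λ_1 + … + λ_m` of the partition encoded by `l`. -/
def psize (m : ℕ) (l : ℕ → ℕ) : ℕ := ∑ i ∈ Finset.Icc 1 m, l i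


namespace OHaraAux

variable (a : ℕ → ℕ)

def Gf : ℕ → ℕ → ℕ
  | m, 0 => ∑ j ∈ Finset.range (m+1), a j
  | 0, _+1 => 0
  | 1, _+1 => 0
  | (m+2), (r+1) => min (Gf (m+1) (r+1) + a (m+2)) (Gf m r)
  termination_by m _ => m

lemma Gf_rec (m r : ℕ) :
    Gf a (m+2) (r+1) = min (Gf a (m+1) (r+1) + a (m+2)) (Gf a m r) := by rw [Gf]

lemma Gf_zero : ∀ m r, m < 2*r → Gf a m r = 0 := by
  intro m
  induction m using Nat.strong_induction_on with
  | _ m ih =>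
    intro r h
    match m, r with
    | 0, r+1 => simp [Gf]
    | 1, r+1 => simp [Gf]
    | (m+2), (r+1) =>
      rw [Gf, ih (m+1) (by omega) (r+1) (by omega), ih m (by omega) r (by omega)]; simp

lemma Gf_at0 (m : ℕ) : Gf a m 0 = ∑ j ∈ Finset.range (m+1), a j := by
  match m with
  | 0 => rw [Gf]
  | 1 => rw [Gf]
  | m+2 => rw [Gf]

lemma Gf_at0_succ (m : ℕ) : Gf a (m+1) 0 = Gf a m 0 + a (m+1) := by
  rw [Gf_at0, Gf_at0, Finset.sum_range_succ]

lemma Gf_anti : ∀ m r, Gf a m (r+1) ≤ Gf a m r := by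
  intro m
  induction m using Nat.strong_induction_on with
  | _ m ih =>
    intro r
    match m with
    | 0 => rw [Gf_zero a 0 (r+1) (by omega)]; omega
    | 1 => rw [Gf_zero a 1 (r+1) (by omega)]; omega
    | m+2 =>
      match r with
      | 0 =>
        have h1 : Gf a (m+2) 1 ≤ Gf a m 0 :=
          le_trans (le_of_eq (Gf_rec a m 0)) (min_le_right _ _)
        refine le_trans h1 ?_
        rw [Gf_at0, Gf_at0]
        exact Finset.sum_le_sum_of_subset (Finset.range_subset_range.mpr (by omega))
      | r'+1 =>
        rw [Gf_rec a m (r'+1), Gf_rec a m r']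
        exact min_le_min (by have := ih (m+1) (by omega) (r'+1); omega)
          (ih m (by omega) r')

/-- Conv, Cross, Cross' -/
lemma GfP : ∀ m,
    (∀ r, Gf a m (r+1) + Gf a m (r+1) ≤ Gf a m r + Gf a m (r+2)) ∧
    (∀ r, Gf a (m+1) (r+1) + Gf a m r ≤ Gf a (m+1) r + Gf a m (r+1)) ∧
    (∀ r, Gf a (m+1) (r+1) + Gf a m (r+1) ≤ Gf a (m+1) (r+2) + Gf a m r) := by
  intro m
  induction m using Nat.strong_induction_on with
  | _ m ih =>
    match m with
    | 0 =>
      refine ⟨?_, ?_, ?_⟩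
      · intro r; rw [Gf_zero a 0 (r+1) (by omega)]; omega
      · intro r
        rw [Gf_zero a 1 (r+1) (by omega)]
        match r with
        | 0 =>
          show 0 + Gf a 0 0 ≤ Gf a 1 0 + Gf a 0 1
          rw [Gf_at0, Gf_at0]
          simp [Finset.sum_range_succ]
          omega
        | r+1 =>
          rw [Gf_zero a 0 (r+1) (by omega)]; omega
      · intro r
        rw [Gf_zero a 1 (r+1) (by omega), Gf_zero a 0 (r+1) (by omega)]; omega
    | 1 =>
      have h2 : ∀ r, Gf a 2 (r+1) = min (Gf a 1 (r+1) + a 2) (Gf a 0 r) := fun r => Gf_rec a 0 r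
      refine ⟨?_, ?_, ?_⟩
      · intro r; rw [Gf_zero a 1 (r+1) (by omega)]; omega
      · intro r
        match r with
        | 0 =>
          show Gf a 2 1 + Gf a 1 0 ≤ Gf a 2 0 + Gf a 1 1
          have h1 : Gf a 2 1 ≤ Gf a 1 1 + a 2 := by rw [h2 0]; exact min_le_left _ _
          rw [Gf_zero a 1 1 (by omega)] at h1 ⊢
          rw [Gf_at0, Gf_at0]
          simp [Finset.sum_range_succ] at h1 ⊢
          omega
        | r+1 =>
          show Gf a 2 (r+2) + Gf a 1 (r+1) ≤ Gf a 2 (r+1) + Gf a 1 (r+2)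
          have h1 : Gf a 2 (r+2) ≤ Gf a 0 (r+1) := by rw [h2 (r+1)]; exact min_le_right _ _
          rw [Gf_zero a 0 (r+1) (by omega)] at h1
          rw [Gf_zero a 1 (r+1) (by omega), Gf_zero a 1 (r+2) (by omega)]
          omega
      · intro r
        match r with
        | 0 =>
          show Gf a 2 1 + Gf a 1 1 ≤ Gf a 2 2 + Gf a 1 0
          rw [Gf_zero a 1 1 (by omega)]
          have h1 : Gf a 2 1 ≤ Gf a 0 0 := by rw [h2 0]; exact min_le_right _ _
          rw [Gf_at0] at h1
          rw [Gf_at0]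
          simp [Finset.sum_range_succ] at h1 ⊢
          omega
        | r+1 =>
          show Gf a 2 (r+2) + Gf a 1 (r+2) ≤ Gf a 2 (r+3) + Gf a 1 (r+1)
          rw [Gf_zero a 1 (r+2) (by omega)]
          have h1 : Gf a 2 (r+2) ≤ Gf a 0 (r+1) := by rw [h2 (r+1)]; exact min_le_right _ _
          rw [Gf_zero a 0 (r+1) (by omega)] at h1
          omega

    | (m+2) =>
      obtain ⟨conv1, cross1, cross1'⟩ := ih (m+1) (by omega)
      obtain ⟨conv0, cross0, cross0'⟩ := ih m (by omega)
      have conv2 : ∀ r, Gf a (m+2) (r+1) + Gf a (m+2) (r+1) ≤ Gf a (m+2) r + Gf a (m+2) (r+2) := by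
        intro r
        match r with
        | 0 =>
          show Gf a (m+2) 1 + Gf a (m+2) 1 ≤ Gf a (m+2) 0 + Gf a (m+2) 2
          have hX1 : Gf a (m+2) 1 ≤ Gf a (m+1) 1 + a (m+2) :=
            le_trans (le_of_eq (Gf_rec a m 0)) (min_le_left _ _)
          have hY1 : Gf a (m+2) 1 ≤ Gf a m 0 :=
            le_trans (le_of_eq (Gf_rec a m 0)) (min_le_right _ _)
          have hs : Gf a (m+2) 0 = Gf a (m+1) 0 + a (m+2) := Gf_at0_succ a (m+1)
          have hrec2 : Gf a (m+2) 2 = min (Gf a (m+1) 2 + a (m+2)) (Gf a m 1) := Gf_rec a m 1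
          rcases le_total (Gf a (m+1) 2 + a (m+2)) (Gf a m 1) with h2 | h2
          · have e2 : Gf a (m+2) 2 = Gf a (m+1) 2 + a (m+2) := by rw [hrec2]; exact min_eq_left h2
            have hv : Gf a (m+1) 1 + Gf a (m+1) 1 ≤ Gf a (m+1) 0 + Gf a (m+1) 2 := conv1 0
            omega
          · have e2 : Gf a (m+2) 2 = Gf a m 1 := by rw [hrec2]; exact min_eq_right h2
            have hv : Gf a (m+1) 1 + Gf a m 0 ≤ Gf a (m+1) 0 + Gf a m 1 := cross0 0
            omega
        | r'+1 =>
          show Gf a (m+2) (r'+2) + Gf a (m+2) (r'+2) ≤ Gf a (m+2) (r'+1) + Gf a (m+2) (r'+3)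
          have hX1 : Gf a (m+2) (r'+2) ≤ Gf a (m+1) (r'+2) + a (m+2) :=
            le_trans (le_of_eq (Gf_rec a m (r'+1))) (min_le_left _ _)
          have hY1 : Gf a (m+2) (r'+2) ≤ Gf a m (r'+1) :=
            le_trans (le_of_eq (Gf_rec a m (r'+1))) (min_le_right _ _)
          have hrec2 : Gf a (m+2) (r'+3) = min (Gf a (m+1) (r'+3) + a (m+2)) (Gf a m (r'+2)) :=
            Gf_rec a m (r'+2)
          have hrec0 : Gf a (m+2) (r'+1) = min (Gf a (m+1) (r'+1) + a (m+2)) (Gf a m r') :=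
            Gf_rec a m r'
          rcases le_total (Gf a (m+1) (r'+3) + a (m+2)) (Gf a m (r'+2)) with h2 | h2
          · have e2 : Gf a (m+2) (r'+3) = Gf a (m+1) (r'+3) + a (m+2) := by
              rw [hrec2]; exact min_eq_left h2
            rcases le_total (Gf a (m+1) (r'+1) + a (m+2)) (Gf a m r') with h0 | h0
            · have e0 : Gf a (m+2) (r'+1) = Gf a (m+1) (r'+1) + a (m+2) := by
                rw [hrec0]; exact min_eq_left h0
              have hv : Gf a (m+1) (r'+2) + Gf a (m+1) (r'+2) ≤ Gf a (m+1) (r'+1) + Gf a (m+1) (r'+3) :=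
                conv1 (r'+1)
              omega
            · have e0 : Gf a (m+2) (r'+1) = Gf a m r' := by
                rw [hrec0]; exact min_eq_right h0
              have hc : Gf a (m+1) (r'+1) + Gf a m (r'+1) ≤ Gf a (m+1) (r'+2) + Gf a m r' :=
                cross0' r'
              have hv : Gf a (m+1) (r'+2) + Gf a (m+1) (r'+2) ≤ Gf a (m+1) (r'+1) + Gf a (m+1) (r'+3) :=
                conv1 (r'+1)
              omega
          · have e2 : Gf a (m+2) (r'+3) = Gf a m (r'+2) := by
              rw [hrec2]; exact min_eq_right h2
            rcases le_total (Gf a (m+1) (r'+1) + a (m+2)) (Gf a m r') with h0 | h0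
            · have e0 : Gf a (m+2) (r'+1) = Gf a (m+1) (r'+1) + a (m+2) := by
                rw [hrec0]; exact min_eq_left h0
              have hc : Gf a (m+1) (r'+2) + Gf a m (r'+1) ≤ Gf a (m+1) (r'+1) + Gf a m (r'+2) :=
                cross0 (r'+1)
              omega
            · have e0 : Gf a (m+2) (r'+1) = Gf a m r' := by
                rw [hrec0]; exact min_eq_right h0
              have hv : Gf a m (r'+1) + Gf a m (r'+1) ≤ Gf a m r' + Gf a m (r'+2) := conv0 r'
              omega
      refine ⟨conv2, ?_, ?_⟩
      · -- Cross (m+2)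
        intro r
        match r with
        | 0 =>
          show Gf a (m+3) 1 + Gf a (m+2) 0 ≤ Gf a (m+3) 0 + Gf a (m+2) 1
          have h1 : Gf a (m+3) 1 ≤ Gf a (m+2) 1 + a (m+3) :=
            le_trans (le_of_eq (Gf_rec a (m+1) 0)) (min_le_left _ _)
          have hs : Gf a (m+3) 0 = Gf a (m+2) 0 + a (m+3) := Gf_at0_succ a (m+2)
          omega
        | r'+1 =>
          show Gf a (m+3) (r'+2) + Gf a (m+2) (r'+1) ≤ Gf a (m+3) (r'+1) + Gf a (m+2) (r'+2)
          have hrec0 : Gf a (m+3) (r'+1) = min (Gf a (m+2) (r'+1) + a (m+3)) (Gf a (m+1) r') :=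
            Gf_rec a (m+1) r'
          rcases le_total (Gf a (m+2) (r'+1) + a (m+3)) (Gf a (m+1) r') with h0 | h0
          · have e0 : Gf a (m+3) (r'+1) = Gf a (m+2) (r'+1) + a (m+3) := by
              rw [hrec0]; exact min_eq_left h0
            have h1 : Gf a (m+3) (r'+2) ≤ Gf a (m+2) (r'+2) + a (m+3) :=
              le_trans (le_of_eq (Gf_rec a (m+1) (r'+1))) (min_le_left _ _)
            omega
          · have e0 : Gf a (m+3) (r'+1) = Gf a (m+1) r' := by
              rw [hrec0]; exact min_eq_right h0
            have h1 : Gf a (m+3) (r'+2) ≤ Gf a (m+1) (r'+1) :=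
              le_trans (le_of_eq (Gf_rec a (m+1) (r'+1))) (min_le_right _ _)
            have hc : Gf a (m+2) (r'+1) + Gf a (m+1) (r'+1) ≤ Gf a (m+2) (r'+2) + Gf a (m+1) r' :=
              cross1' r'
            omega
      · -- Cross' (m+2)
        intro r
        show Gf a (m+3) (r+1) + Gf a (m+2) (r+1) ≤ Gf a (m+3) (r+2) + Gf a (m+2) r
        have hrec2 : Gf a (m+3) (r+2) = min (Gf a (m+2) (r+2) + a (m+3)) (Gf a (m+1) (r+1)) :=
          Gf_rec a (m+1) (r+1)
        rcases le_total (Gf a (m+2) (r+2) + a (m+3)) (Gf a (m+1) (r+1)) with h2 | h2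
        · have e2 : Gf a (m+3) (r+2) = Gf a (m+2) (r+2) + a (m+3) := by
            rw [hrec2]; exact min_eq_left h2
          have h1 : Gf a (m+3) (r+1) ≤ Gf a (m+2) (r+1) + a (m+3) :=
            le_trans (le_of_eq (Gf_rec a (m+1) r)) (min_le_left _ _)
          have hv : Gf a (m+2) (r+1) + Gf a (m+2) (r+1) ≤ Gf a (m+2) r + Gf a (m+2) (r+2) :=
            conv2 r
          omega
        · have e2 : Gf a (m+3) (r+2) = Gf a (m+1) (r+1) := by
            rw [hrec2]; exact min_eq_right h2
          have h1 : Gf a (m+3) (r+1) ≤ Gf a (m+1) r :=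
            le_trans (le_of_eq (Gf_rec a (m+1) r)) (min_le_right _ _)
          have hc : Gf a (m+2) (r+1) + Gf a (m+1) r ≤ Gf a (m+2) r + Gf a (m+1) (r+1) :=
            cross1 r
          omega

lemma Gf_le_sum : ∀ m r (t : ℕ → ℕ), 2*r ≤ m → Monotone t → (∀ j, t j ≤ r) →
    Gf a m r ≤ ∑ j ∈ Finset.range (m - 2*r + 1), a (2 * t j + j) := by
  intro m
  induction m using Nat.strong_induction_on with
  | _ m ih =>
    intro r t hrm hmono hb
    match r with
    | 0 =>
      apply le_of_eq
      rw [Gf_at0]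
      apply Finset.sum_congr (by norm_num)
      intro j _
      have : t j = 0 := Nat.le_zero.mp (hb j)
      rw [this]; norm_num
    | r'+1 =>
      obtain ⟨m'', rfl⟩ : ∃ m'', m = m''+2 := ⟨m-2, by omega⟩
      rw [show m''+2 - 2*(r'+1) + 1 = (m'' - 2*r') + 1 from by omega]
      by_cases h1 : t (m'' - 2*r') ≤ r'
      · have hle : Gf a (m''+2) (r'+1) ≤ Gf a m'' r' :=
          le_trans (le_of_eq (Gf_rec a m'' r')) (min_le_right _ _)
        have key := ih m'' (by omega) r' (fun j => min (t j) r') (by omega)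
          (fun i j hij => min_le_min (hmono hij) le_rfl) (fun j => min_le_right _ _)
        have heq : ∑ j ∈ Finset.range (m'' - 2*r' + 1), a (2 * min (t j) r' + j)
            = ∑ j ∈ Finset.range (m'' - 2*r' + 1), a (2 * t j + j) := by
          apply Finset.sum_congr rfl
          intro j hj
          have hjK : j ≤ m'' - 2*r' := by
            simp only [Finset.mem_range] at hj; omega
          rw [min_eq_left (le_trans (hmono hjK) h1)]
        calc Gf a (m''+2) (r'+1) ≤ Gf a m'' r' := hle
          _ ≤ ∑ j ∈ Finset.range (m'' - 2*r' + 1), a (2 * min (t j) r' + j) := key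
          _ = _ := heq
      · have htK : t (m'' - 2*r') = r'+1 := by have := hb (m'' - 2*r'); omega
        rw [Finset.sum_range_succ]
        rw [show 2 * t (m'' - 2*r') + (m'' - 2*r') = m''+2 from by omega]
        have hle : Gf a (m''+2) (r'+1) ≤ Gf a (m''+1) (r'+1) + a (m''+2) :=
          le_trans (le_of_eq (Gf_rec a m'' r')) (min_le_left _ _)
        have hK2 : Gf a (m''+1) (r'+1) ≤ ∑ j ∈ Finset.range (m'' - 2*r'), a (2 * t j + j) := by
          rcases Nat.eq_zero_or_pos (m'' - 2*r') with hK3 | hK3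
          · rw [hK3, Gf_zero a (m''+1) (r'+1) (by omega)]
            simp
          · have := ih (m''+1) (by omega) (r'+1) t (by omega) hmono hb
            rwa [show m''+1 - 2*(r'+1) + 1 = m'' - 2*r' from by omega] at this
        omega

lemma Gf_mem : ∀ m r, 2*r ≤ m → ∃ t : ℕ → ℕ, Monotone t ∧ (∀ j, t j ≤ r) ∧
    Gf a m r = ∑ j ∈ Finset.range (m - 2*r + 1), a (2 * t j + j) := by
  intro m
  induction m using Nat.strong_induction_on with
  | _ m ih =>
    intro r hrm
    match r with
    | 0 =>
      refine ⟨fun _ => 0, monotone_const, fun _ => le_rfl, ?_⟩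
      rw [Gf_at0]
      apply Finset.sum_congr (by norm_num)
      intro j _; norm_num
    | r'+1 =>
      obtain ⟨m'', rfl⟩ : ∃ m'', m = m''+2 := ⟨m-2, by omega⟩
      rcases le_total (Gf a (m''+1) (r'+1) + a (m''+2)) (Gf a m'' r') with h | h
      · have e : Gf a (m''+2) (r'+1) = Gf a (m''+1) (r'+1) + a (m''+2) := by
          rw [Gf_rec]; exact min_eq_left h
        by_cases hm2 : m'' = 2*r'
        · refine ⟨fun _ => r'+1, monotone_const, fun _ => le_rfl, ?_⟩
          rw [e, Gf_zero a (m''+1) (r'+1) (by omega),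
            show m''+2 - 2*(r'+1) + 1 = 1 from by omega, Finset.sum_range_one,
            show 2*(r'+1) + 0 = m''+2 from by omega]
          omega
        · obtain ⟨t, hmono, hb, hsum⟩ := ih (m''+1) (by omega) (r'+1) (by omega)
          refine ⟨fun j => if j < m'' - 2*r' then t j else r'+1, ?_, ?_, ?_⟩
          · intro i j hij
            by_cases hi : i < m'' - 2*r'
            · by_cases hj : j < m'' - 2*r'
              · simpa [hi, hj] using hmono hij
              · simpa [hi, hj] using hb i
            · have hj : ¬ j < m'' - 2*r' := by omega
              simp [hi, hj]
          · intro j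
            by_cases hj : j < m'' - 2*r' <;> simp [hj]
            exact hb j
          · rw [e, show m''+2 - 2*(r'+1) + 1 = (m'' - 2*r') + 1 from by omega,
              Finset.sum_range_succ]
            beta_reduce
            rw [if_neg (lt_irrefl _)]
            rw [show 2 * (r'+1) + (m'' - 2*r') = m''+2 from by omega]
            congr 1
            rw [hsum, show m''+1 - 2*(r'+1) + 1 = m'' - 2*r' from by omega]
            apply Finset.sum_congr rfl
            intro j hj
            simp only [Finset.mem_range] at hj
            rw [if_pos hj]
      · have e : Gf a (m''+2) (r'+1) = Gf a m'' r' := by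
          rw [Gf_rec]; exact min_eq_right h
        obtain ⟨t, hmono, hb, hsum⟩ := ih m'' (by omega) r' (by omega)
        refine ⟨t, hmono, fun j => le_trans (hb j) (by omega), ?_⟩
        rw [e, hsum, show m''+2 - 2*(r'+1) + 1 = m'' - 2*r' + 1 from by omega]

lemma fmr_eq (m r : ℕ) (l : ℕ → ℕ) (hr : 2*r ≤ m) :
    fmr m r l = Gf (fun i => l i - l (i+1)) m r := by
  set a : ℕ → ℕ := fun i => l i - l (i+1) with ha
  have hmem : Gf a m r ∈ { S | ∃ t : Fin (m - 2 * r + 1) → ℕ,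
      (∀ i j, i ≤ j → t i ≤ t j) ∧ (∀ i, t i ≤ r) ∧
      S = ∑ j, (l (2 * t j + (j : ℕ)) - l (2 * t j + (j : ℕ) + 1)) } := by
    obtain ⟨t, hmono, hb, hsum⟩ := Gf_mem a m r hr
    refine ⟨fun j => t ↑j, fun i j hij => hmono hij, fun j => hb ↑j, ?_⟩
    rw [hsum, ← Fin.sum_univ_eq_sum_range (fun j => a (2 * t j + j)) (m - 2*r + 1)]
  have hlow : ∀ S ∈ { S | ∃ t : Fin (m - 2 * r + 1) → ℕ,
      (∀ i j, i ≤ j → t i ≤ t j) ∧ (∀ i, t i ≤ r) ∧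
      S = ∑ j, (l (2 * t j + (j : ℕ)) - l (2 * t j + (j : ℕ) + 1)) },
      Gf a m r ≤ S := by
    rintro S ⟨t, hmono, hb, rfl⟩
    have hlt : ∀ j : ℕ, min j (m - 2*r) < m - 2*r + 1 := by omega
    set t' : ℕ → ℕ := fun j => t ⟨min j (m - 2*r), hlt j⟩ with ht'
    have hmono' : Monotone t' := by
      intro i j hij
      exact hmono _ _ (by simp [Fin.le_def]; omega)
    have hb' : ∀ j, t' j ≤ r := fun j => hb _
    have key := Gf_le_sum a m r t' hr hmono' hb'
    refine le_trans key (le_of_eq ?_)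
    rw [← Fin.sum_univ_eq_sum_range (fun j => a (2 * t' j + j)) (m - 2*r + 1)]
    apply Finset.sum_congr rfl
    intro j _
    have hj : (j : ℕ) ≤ m - 2*r := by omega
    have : t' (j : ℕ) = t j := by
      rw [ht']
      exact congrArg t (Fin.ext (by simpa using hj))
    rw [this]
  exact le_antisymm (Nat.sInf_le hmem) (le_csInf ⟨_, hmem⟩ hlow)

lemma telescope (m n : ℕ) (l : ℕ → ℕ) (hl : InBox m n l) :
    Gf (fun i => l i - l (i+1)) m 0 = n := by
  obtain ⟨h0, htop, hstep⟩ := hl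
  have anti : Antitone l := antitone_nat_of_succ_le hstep
  have key : ∀ M, ∑ j ∈ Finset.range M, (l j - l (j+1)) = l 0 - l M := by
    intro M
    induction M with
    | zero => simp
    | succ M ihM =>
      rw [Finset.sum_range_succ, ihM]
      have h1 : l (M+1) ≤ l M := hstep M
      have h2 : l M ≤ l 0 := anti (Nat.zero_le M)
      omega
  rw [Gf_at0, key (m+1), htop (m+1) (by omega), h0]
  omega

end OHaraAux

open OHaraAux

/-- The sets `Q_m(d_0, …, d_k)` partition the underlying ranked set of
`L(m,n)` (the decomposition part of O'Hara's structure theorem). -/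

theorem stmt11 (m n : ℕ) (hm : 0 < m) (hn : 0 < n) (l : ℕ → ℕ) (hl : InBox m n l) :
    ∃! d : Fin (m / 2 + 1) → ℕ,
      (∑ j : Fin (m / 2 + 1), ((j : ℕ) + 1) * d j = n) ∧ InQ m n d l := by
  set k := m / 2 with hk
  set a : ℕ → ℕ := fun i => l i - l (i+1) with ha
  set g : ℕ → ℕ := fun r => Gf a m r with hg
  have hg0 : g 0 = n := telescope m n l hl
  have hconv : ∀ j, g (j+1) + g (j+1) ≤ g j + g (j+2) := (GfP a m).1
  have hanti : ∀ j, g (j+1) ≤ g j := fun j => Gf_anti a m j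
  have hzero : ∀ j, k < j → g j = 0 := fun j hj => Gf_zero a m j (by omega)
  set d0 : ℕ → ℕ := fun j => g j + g (j+2) - 2 * g (j+1) with hd0
  have hA : ∀ j, g j + g (j+2) = 2 * g (j+1) + d0 j := by
    intro j; have := hconv j; simp only [hd0]; omega
  -- L1 : suffix sums of d0 are consecutive differences of g
  have L1 : ∀ i r, r + i = k + 1 → g r = g (r+1) + ∑ j ∈ Finset.Icc r k, d0 j := by
    intro i
    induction i with
    | zero =>
      intro r hr
      rw [Finset.Icc_eq_empty (by omega), Finset.sum_empty,
        hzero r (by omega), hzero (r+1) (by omega)]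
      omega
    | succ i ihi =>
      intro r hr
      have hins : Finset.Icc r k = insert r (Finset.Icc (r+1) k) := by
        ext x; simp [Finset.mem_Icc, Finset.mem_insert]; omega
      rw [hins, Finset.sum_insert (by simp [Finset.mem_Icc])]
      have h1 : g (r+1) = g (r+2) + ∑ j ∈ Finset.Icc (r+1) k, d0 j := ihi (r+1) (by omega)
      have h2 := hA r
      have h3 := hanti (r+1)
      omega
  -- L2 : g r is the weighted suffix sum
  have L2 : ∀ i r, r + i = k + 1 →
      g r = ∑ j ∈ Finset.Icc r k, (j + 1 - r) * d0 j := by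
    intro i
    induction i with
    | zero =>
      intro r hr
      rw [Finset.Icc_eq_empty (by omega), Finset.sum_empty, hzero r (by omega)]
    | succ i ihi =>
      intro r hr
      have hsplit : ∑ j ∈ Finset.Icc r k, (j + 1 - r) * d0 j
          = (∑ j ∈ Finset.Icc r k, d0 j) + ∑ j ∈ Finset.Icc (r+1) k, (j + 1 - (r+1)) * d0 j := by
        have e1 : ∑ j ∈ Finset.Icc r k, (j + 1 - r) * d0 j
            = ∑ j ∈ Finset.Icc r k, (d0 j + (j - r) * d0 j) := by
          apply Finset.sum_congr rfl
          intro j hj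
          simp only [Finset.mem_Icc] at hj
          rw [show j + 1 - r = 1 + (j - r) from by omega, add_mul, one_mul]
        rw [e1, Finset.sum_add_distrib]
        congr 1
        have hins : Finset.Icc r k = insert r (Finset.Icc (r+1) k) := by
          ext x; simp [Finset.mem_Icc, Finset.mem_insert]; omega
        rw [hins, Finset.sum_insert (by simp [Finset.mem_Icc]), Nat.sub_self, zero_mul, zero_add]
        apply Finset.sum_congr rfl
        intro j hj
        simp only [Finset.mem_Icc] at hj
        rw [show j + 1 - (r+1) = j - r from by omega]
      have h1 := ihi (r+1) (by omega)
      have h2 := L1 i (r+1) (by omega)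
      have h3 := L1 (i+1) r (by omega)
      omega
  have hgr : ∀ r, r ≤ k + 1 → g r = ∑ j ∈ Finset.Icc r k, (j + 1 - r) * d0 j :=
    fun r hr => L2 (k + 1 - r) r (by omega)
  -- conversion between range sums and Icc sums
  have hIccRange : ∀ (dd : ℕ → ℕ) (r : ℕ),
      ∑ j ∈ Finset.range (k+1), (j + 1 - r) * dd j
        = ∑ j ∈ Finset.Icc r k, (j + 1 - r) * dd j := by
    intro dd r
    symm
    apply Finset.sum_subset
    · intro x hx; simp only [Finset.mem_Icc] at hx; simp only [Finset.mem_range]; omega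
    · intro x hx hnx
      simp only [Finset.mem_range] at hx
      simp only [Finset.mem_Icc] at hnx
      rw [show x + 1 - r = 0 from by omega, zero_mul]
  -- the algebraic step identity for range sums
  have I1 : ∀ (dd : ℕ → ℕ) (r : ℕ),
      ∑ j ∈ Finset.range (k+1), (j + 1 - r) * dd j
        = (∑ j ∈ Finset.range (k+1), (j + 1 - (r+1)) * dd j) + ∑ j ∈ Finset.Icc r k, dd j := by
    intro dd r
    have e1 : ∀ j ∈ Finset.range (k+1),
        (j + 1 - r) * dd j = (j + 1 - (r+1)) * dd j + (if r ≤ j then dd j else 0) := by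
      intro j _
      by_cases h : r ≤ j
      · rw [if_pos h, show j + 1 - r = (j + 1 - (r+1)) + 1 from by omega, add_mul, one_mul]
      · rw [if_neg h, show j + 1 - r = 0 from by omega, show j + 1 - (r+1) = 0 from by omega]
        simp
    rw [Finset.sum_congr rfl e1, Finset.sum_add_distrib]
    congr 1
    rw [← Finset.sum_filter]
    apply Finset.sum_congr ?_ (fun _ _ => rfl)
    ext x
    simp only [Finset.mem_filter, Finset.mem_range, Finset.mem_Icc]
    omega
  set d : Fin (k + 1) → ℕ := fun j => d0 (j : ℕ) with hd
  have hFinRange : ∀ (r : ℕ), ∑ j : Fin (k+1), ((j : ℕ) + 1 - r) * d j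
      = ∑ j ∈ Finset.range (k+1), (j + 1 - r) * d0 j := by
    intro r
    exact Fin.sum_univ_eq_sum_range (fun j => (j + 1 - r) * d0 j) (k+1)
  have hdsum : ∑ j : Fin (k + 1), ((j : ℕ) + 1) * d j = n := by
    have h1 : ∑ j : Fin (k + 1), ((j : ℕ) + 1) * d j
        = ∑ j : Fin (k+1), ((j : ℕ) + 1 - 0) * d j := by
      apply Finset.sum_congr rfl; intro j _; rw [Nat.sub_zero]
    rw [h1, hFinRange 0, hIccRange d0 0, ← hgr 0 (by omega), hg0]
  have heqs : ∀ r, 1 ≤ r → r ≤ k →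
      fmr m r l = ∑ j : Fin (k + 1), ((j : ℕ) + 1 - r) * d j := by
    intro r h1 h2
    rw [hFinRange r, hIccRange d0 r, ← hgr r (by omega)]
    exact fmr_eq m r l (by omega)
  refine ⟨d, ⟨hdsum, hl, heqs⟩, ?_⟩
  -- uniqueness
  intro d' ⟨hsum', hInQ'⟩
  have hlt' : ∀ j : ℕ, j < k + 1 → j < k + 1 := fun _ h => h
  set dd' : ℕ → ℕ := fun j => if h : j < k + 1 then d' ⟨j, h⟩ else 0 with hdd'
  have hddval : ∀ j : Fin (k+1), dd' (j : ℕ) = d' j := by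
    intro j
    simp only [hdd']
    rw [dif_pos j.isLt]
  have hFinRange' : ∀ (r : ℕ), ∑ j : Fin (k+1), ((j : ℕ) + 1 - r) * d' j
      = ∑ j ∈ Finset.range (k+1), (j + 1 - r) * dd' j := by
    intro r
    rw [← Fin.sum_univ_eq_sum_range (fun j => (j + 1 - r) * dd' j) (k+1)]
    apply Finset.sum_congr rfl
    intro j _
    rw [hddval j]
  -- T equality for all r
  have hT : ∀ r, ∑ j ∈ Finset.range (k+1), (j + 1 - r) * dd' j
      = ∑ j ∈ Finset.range (k+1), (j + 1 - r) * d0 j := by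
    intro r
    rcases Nat.eq_zero_or_pos r with rfl | hr1
    · rw [← hFinRange 0, ← hFinRange' 0]
      have h1 : ∀ (e : Fin (k+1) → ℕ), ∑ j : Fin (k+1), ((j : ℕ) + 1 - 0) * e j
          = ∑ j : Fin (k+1), ((j : ℕ) + 1) * e j := by
        intro e; apply Finset.sum_congr rfl; intro j _; rw [Nat.sub_zero]
      rw [h1 d, h1 d', hdsum, hsum']
    · by_cases hrk : r ≤ k
      · rw [← hFinRange r, ← hFinRange' r, ← heqs r hr1 hrk, ← hInQ'.2 r hr1 hrk]
      · have hz : ∀ (dd : ℕ → ℕ), ∑ j ∈ Finset.range (k+1), (j + 1 - r) * dd j = 0 := by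
          intro dd
          apply Finset.sum_eq_zero
          intro j hj
          simp only [Finset.mem_range] at hj
          rw [show j + 1 - r = 0 from by omega, zero_mul]
        rw [hz, hz]
  have hD : ∀ r, ∑ j ∈ Finset.Icc r k, dd' j = ∑ j ∈ Finset.Icc r k, d0 j := by
    intro r
    have e1 := I1 dd' r
    have e2 := I1 d0 r
    have e3 := hT r
    have e4 := hT (r+1)
    omega
  funext j
  have hjk : (j : ℕ) ≤ k := by omega
  have hins : ∀ (dd : ℕ → ℕ), ∑ x ∈ Finset.Icc (j : ℕ) k, dd x
      = dd (j : ℕ) + ∑ x ∈ Finset.Icc ((j : ℕ)+1) k, dd x := by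
    intro dd
    rw [show Finset.Icc (j : ℕ) k = insert (j : ℕ) (Finset.Icc ((j : ℕ)+1) k) from by
      ext x; simp [Finset.mem_Icc, Finset.mem_insert]; omega,
      Finset.sum_insert (by simp [Finset.mem_Icc])]
  have e1 := hD (j : ℕ)
  have e2 := hD ((j : ℕ) + 1)
  rw [hins dd', hins d0] at e1
  have : dd' (j : ℕ) = d0 (j : ℕ) := by omega
  rw [← hddval j, this]
end

section
/- Let m, n be positive integers, k = ⌊m/2⌋, and let (d_0,…,d_k) be nonnegative integers with ∑_{j=0}^k (j+1)d_j = n. Then Q_m(d_0,…,d_k) contains a unique element λ of minimal size (i.e., |λ| ≤ |μ| for all μ ∈ Q_m(d_0,…,d_k)), and this minimal size equals ∑_{j=0}^k j(j+1)d_j. -/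
namespace Stmt12Aux

lemma anti_of_step (l : ℕ → ℕ) (h : ∀ i, l (i+1) ≤ l i) {i j : ℕ} (hij : i ≤ j) :
    l j ≤ l i := by
  induction hij with
  | refl => exact le_rfl
  | step _ ih => exact le_trans (h _) ih

lemma telescope (l : ℕ → ℕ) (h : ∀ i, l (i+1) ≤ l i) (a : ℕ) :
    ∀ N, ∑ j ∈ Finset.range N, (l (a+j) - l (a+j+1)) = l a - l (a+N) := by
  intro N
  induction N with
  | zero => simp
  | succ N ih =>
    rw [Finset.sum_range_succ, ih, ← Nat.add_assoc]
    have h1 : l (a+N) ≤ l a := anti_of_step l h (by omega)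
    have h2 : l (a+N+1) ≤ l (a+N) := h _
    omega

lemma sum_const_t (m r : ℕ) (l : ℕ → ℕ) (hstep : ∀ i, l (i+1) ≤ l i)
    (hz : ∀ i, m < i → l i = 0) (hr : 2*r ≤ m) :
    ∑ j : Fin (m - 2*r + 1), (l (2*r + (j:ℕ)) - l (2*r + (j:ℕ) + 1)) = l (2*r) := by
  rw [Fin.sum_univ_eq_sum_range (fun x => l (2*r + x) - l (2*r + x + 1)),
    telescope l hstep, hz (2*r + (m - 2*r + 1)) (by omega), Nat.sub_zero]

lemma fmr_le (m r : ℕ) (l : ℕ → ℕ) (hstep : ∀ i, l (i+1) ≤ l i)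
    (hz : ∀ i, m < i → l i = 0) (hr : 2*r ≤ m) : fmr m r l ≤ l (2*r) := by
  apply Nat.sInf_le
  exact ⟨fun _ => r, fun _ _ _ => le_rfl, fun _ => le_rfl,
    (sum_const_t m r l hstep hz hr).symm⟩

/-- The minimal element of `Q_m(d)`: `λ_{2i-1} = λ_{2i} = ∑_{j≥i} (j+1-i) d_j`. -/
def minL (k : ℕ) (d : Fin (k+1) → ℕ) (i : ℕ) : ℕ :=
  ∑ j : Fin (k+1), (((j : ℕ) + 1) - (i+1)/2) * d j

lemma minL_zero (k : ℕ) (d : Fin (k+1) → ℕ) :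
    minL k d 0 = ∑ j : Fin (k+1), ((j:ℕ)+1) * d j := by
  unfold minL
  norm_num

lemma minL_step (k : ℕ) (d : Fin (k+1) → ℕ) (i : ℕ) : minL k d (i+1) ≤ minL k d i := by
  unfold minL
  exact Finset.sum_le_sum fun j _ => mul_le_mul_left (by omega) _

lemma minL_eq_zero (k : ℕ) (d : Fin (k+1) → ℕ) (i : ℕ) (h : 2*k < i) :
    minL k d i = 0 := by
  unfold minL
  apply Finset.sum_eq_zero
  intro j _
  have hj := j.isLt
  have h0 : ((j:ℕ)+1) - (i+1)/2 = 0 := by omega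
  rw [h0, zero_mul]

lemma minL_diff (k : ℕ) (d : Fin (k+1) → ℕ) (i : ℕ) :
    minL k d i - minL k d (i+1) =
    ∑ j : Fin (k+1), ((((j:ℕ)+1) - (i+1)/2) - (((j:ℕ)+1) - (i+1+1)/2)) * d j := by
  unfold minL
  rw [← Finset.sum_tsub_distrib _ (fun j _ => mul_le_mul_left (by omega) _)]
  exact Finset.sum_congr rfl fun j _ => (Nat.sub_mul _ _ _).symm

lemma minL_key (k : ℕ) (d : Fin (k+1) → ℕ) (c t r : ℕ) (h : t ≤ r) :
    minL k d (2*r+c) - minL k d (2*r+c+1) ≤ minL k d (2*t+c) - minL k d (2*t+c+1) := by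
  rw [minL_diff, minL_diff]
  exact Finset.sum_le_sum fun j _ => mul_le_mul_left (by omega) _

lemma minL_eq_sum (k : ℕ) (d : Fin (k+1) → ℕ) (i r : ℕ) (h : (i+1)/2 = r) :
    minL k d i = ∑ j : Fin (k+1), (((j:ℕ)+1) - r) * d j := by
  unfold minL
  rw [h]

lemma minL_two_mul (k : ℕ) (d : Fin (k+1) → ℕ) (r : ℕ) :
    minL k d (2*r) = ∑ j : Fin (k+1), (((j:ℕ)+1) - r) * d j :=
  minL_eq_sum k d (2*r) r (by omega)

lemma inner_sum (m : ℕ) : ∀ j : ℕ, 2 * j ≤ m →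
    ∑ i ∈ Finset.Icc 1 m, ((j + 1) - (i + 1) / 2) = j * (j + 1) := by
  intro j
  induction j with
  | zero =>
    intro _
    apply Finset.sum_eq_zero
    intro i hi
    simp only [Finset.mem_Icc] at hi
    omega
  | succ j ih =>
    intro hj
    have key : ∀ i ∈ Finset.Icc 1 m, (j + 1 + 1) - (i + 1) / 2
        = ((j + 1) - (i + 1) / 2) + (if i ≤ 2 * j + 2 then 1 else 0) := by
      intro i hi
      simp only [Finset.mem_Icc] at hi
      split <;> omega
    rw [Finset.sum_congr rfl key, Finset.sum_add_distrib, ih (by omega), Finset.sum_boole]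
    have hfil : (Finset.Icc 1 m).filter (fun i => i ≤ 2 * j + 2) = Finset.Icc 1 (2 * j + 2) := by
      ext i
      simp only [Finset.mem_filter, Finset.mem_Icc]
      omega
    rw [hfil]
    simp [Nat.card_Icc]
    ring

lemma minL_psize (m : ℕ) (d : Fin (m/2+1) → ℕ) :
    psize m (minL (m/2) d) = ∑ j : Fin (m/2+1), (j:ℕ) * ((j:ℕ)+1) * d j := by
  unfold psize minL
  rw [Finset.sum_comm]
  refine Finset.sum_congr rfl fun j _ => ?_
  rw [← Finset.sum_mul, inner_sum m (j:ℕ) (by have := j.isLt; omega)]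

end Stmt12Aux

/-- `Q_m(d_0, …, d_k)` has a unique element of minimal size, of size
`∑ j, j(j+1) d_j`. -/
theorem stmt12 (m n : ℕ) (hm : 0 < m) (hn : 0 < n) (d : Fin (m / 2 + 1) → ℕ)
    (hd : ∑ j : Fin (m / 2 + 1), ((j : ℕ) + 1) * d j = n) :
    ∃ l, InQ m n d l ∧ psize m l = ∑ j : Fin (m / 2 + 1), (j : ℕ) * ((j : ℕ) + 1) * d j ∧
      ∀ l', InQ m n d l' → l' ≠ l → psize m l < psize m l' := by
  classical
  set L := Stmt12Aux.minL (m / 2) d with hLdef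
  have hstep : ∀ i, L (i+1) ≤ L i := Stmt12Aux.minL_step (m / 2) d
  have hz : ∀ i, m < i → L i = 0 := fun i hi =>
    Stmt12Aux.minL_eq_zero (m / 2) d i (by omega)
  have hL0 : L 0 = n := by rw [hLdef, Stmt12Aux.minL_zero]; exact hd
  have hbox : InBox m n L := ⟨hL0, hz, hstep⟩
  have hfmrL : ∀ r, 1 ≤ r → r ≤ m / 2 →
      fmr m r L = ∑ j : Fin (m / 2 + 1), ((j:ℕ)+1-r) * d j := by
    intro r h1 h2
    have hrm : 2*r ≤ m := by omega
    apply le_antisymm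
    · have h := Stmt12Aux.fmr_le m r L hstep hz hrm
      rwa [hLdef, Stmt12Aux.minL_two_mul] at h
    · apply le_csInf
      · exact ⟨_, fun _ => r, fun _ _ _ => le_rfl, fun _ => le_rfl, rfl⟩
      · rintro S ⟨t, _, hbound, rfl⟩
        calc (∑ j : Fin (m / 2 + 1), ((j:ℕ)+1-r) * d j)
            = ∑ j : Fin (m - 2*r + 1), (L (2*r + (j:ℕ)) - L (2*r + (j:ℕ) + 1)) := by
              rw [Stmt12Aux.sum_const_t m r L hstep hz hrm, hLdef,
                Stmt12Aux.minL_two_mul]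
          _ ≤ ∑ j : Fin (m - 2*r + 1), (L (2 * t j + (j:ℕ)) - L (2 * t j + (j:ℕ) + 1)) := by
              refine Finset.sum_le_sum fun j _ => ?_
              rw [hLdef]
              exact Stmt12Aux.minL_key (m / 2) d (j:ℕ) (t j) r (hbound j)
  have hQL : InQ m n d L := ⟨hbox, hfmrL⟩
  have hmu : ∀ l', InQ m n d l' → ∀ i, 1 ≤ i → L i ≤ l' i := by
    intro l' hl' i hi
    by_cases hc : (i+1)/2 ≤ m / 2
    · have h1 : 1 ≤ (i+1)/2 := by omega
      have hfm := hl'.2 ((i+1)/2) h1 hc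
      have hle : fmr m ((i+1)/2) l' ≤ l' (2*((i+1)/2)) :=
        Stmt12Aux.fmr_le m ((i+1)/2) l' hl'.1.2.2 hl'.1.2.1 (by omega)
      rw [hfm] at hle
      have hmono : l' (2*((i+1)/2)) ≤ l' i :=
        Stmt12Aux.anti_of_step l' hl'.1.2.2 (by omega)
      rw [hLdef, Stmt12Aux.minL_eq_sum (m / 2) d i ((i+1)/2) rfl]
      exact le_trans hle hmono
    · rw [hLdef, Stmt12Aux.minL_eq_zero (m / 2) d i (by omega)]
      exact Nat.zero_le _
  refine ⟨L, hQL, by rw [hLdef]; exact Stmt12Aux.minL_psize m d, ?_⟩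
  intro l' hl' hne
  have hex : ∃ i, l' i ≠ L i := by
    by_contra hco
    push_neg at hco
    exact hne (funext hco)
  obtain ⟨i0, hi0⟩ := hex
  have hi0m : 1 ≤ i0 ∧ i0 ≤ m := by
    constructor
    · rcases Nat.eq_zero_or_pos i0 with h | h
      · subst h; rw [hl'.1.1, hL0] at hi0; exact absurd rfl hi0
      · exact h
    · by_contra hgt
      rw [hl'.1.2.1 i0 (by omega), hz i0 (by omega)] at hi0
      exact hi0 rfl
  unfold psize
  apply Finset.sum_lt_sum
  · intro i hi
    simp only [Finset.mem_Icc] at hi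
    exact hmu l' hl' i hi.1
  · exact ⟨i0, Finset.mem_Icc.mpr hi0m,
      lt_of_le_of_ne (hmu l' hl' i0 hi0m.1) (Ne.symm hi0)⟩
end

section
/- Let m, n be positive integers, k = ⌊m/2⌋, and let (d_0,…,d_k) be nonnegative integers with ∑_{j=0}^k (j+1)d_j = n. Then Q_m(d_0,…,d_k) is rank-symmetric about mn/2: for every integer s with 0 ≤ s ≤ mn, the number of λ ∈ Q_m(d_0,…,d_k) with |λ| = s equals the number of λ ∈ Q_m(d_0,…,d_k) with |λ| = mn − s. -/
/-! ### Auxiliary: complementation in the box -/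

/-- Box complement: `(comp l)_i = n - λ_{m+1-i}`. -/
def BoxComp (m n : ℕ) (l : ℕ → ℕ) : ℕ → ℕ :=
  fun i => if i = 0 then n else if i ≤ m then n - l (m + 1 - i) else 0

lemma InBox.anti {m n : ℕ} {l : ℕ → ℕ} (hl : InBox m n l) :
    ∀ i j, i ≤ j → l j ≤ l i := by
  intro i j hij
  induction j with
  | zero => have : i = 0 := by omega
            subst this; exact le_rfl
  | succ j ih =>
      rcases Nat.eq_or_lt_of_le hij with h | h
      · subst h; exact le_rfl
      · exact le_trans (hl.2.2 j) (ih (by omega))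

lemma InBox.le_n {m n : ℕ} {l : ℕ → ℕ} (hl : InBox m n l) (i : ℕ) : l i ≤ n := by
  simpa [hl.1] using hl.anti 0 i (Nat.zero_le i)

lemma boxComp_inBox {m n : ℕ} {l : ℕ → ℕ} (hm : 0 < m) (hl : InBox m n l) :
    InBox m n (BoxComp m n l) := by
  refine ⟨by simp [BoxComp], fun i hi => ?_, ?_⟩
  · unfold BoxComp
    rw [if_neg (show ¬ i = 0 by omega), if_neg (show ¬ i ≤ m by omega)]
  · intro i
    unfold BoxComp
    rcases Nat.eq_zero_or_pos i with rfl | hi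
    · rw [if_pos rfl]
      split_ifs <;> omega
    · rw [if_neg (show ¬ i + 1 = 0 by omega), if_neg (show ¬ i = 0 by omega)]
      by_cases h3 : i + 1 ≤ m
      · rw [if_pos h3, if_pos (by omega : i ≤ m)]
        have : l (m + 1 - i) ≤ l (m + 1 - (i + 1)) := by
          have e : m + 1 - i = (m + 1 - (i + 1)) + 1 := by omega
          rw [e]; exact hl.2.2 _
        omega
      · rw [if_neg h3]
        split_ifs <;> omega

lemma boxComp_boxComp {m n : ℕ} {l : ℕ → ℕ} (hl : InBox m n l) :
    BoxComp m n (BoxComp m n l) = l := by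
  funext i
  unfold BoxComp
  rcases Nat.eq_zero_or_pos i with rfl | hi
  · simp [hl.1]
  by_cases him : i ≤ m
  · have h1 : i ≠ 0 := by omega
    have h2 : m + 1 - i ≠ 0 := by omega
    have h3 : m + 1 - i ≤ m := by omega
    have h4 : m + 1 - (m + 1 - i) = i := by omega
    simp only [h1, him, h2, h3, h4, if_false, if_true]
    have := hl.le_n i
    omega
  · have h1 : i ≠ 0 := by omega
    simp only [h1, him, if_false]
    exact (hl.2.1 i (by omega)).symm

lemma boxComp_diff {m n : ℕ} {l : ℕ → ℕ} (hm : 0 < m) (hl : InBox m n l) {i : ℕ}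
    (hi : i ≤ m) :
    BoxComp m n l i - BoxComp m n l (i + 1) = l (m - i) - l (m - i + 1) := by
  have hmono := hl.anti
  have hn := hl.le_n
  rcases Nat.eq_zero_or_pos i with rfl | hip
  · have c0 : BoxComp m n l 0 = n := by simp [BoxComp]
    have c1 : BoxComp m n l 1 = n - l m := by
      unfold BoxComp
      rw [if_neg one_ne_zero, if_pos (by omega : 1 ≤ m)]
      norm_num
    rw [c0, c1, Nat.sub_zero]
    have h3 : l (m + 1) = 0 := hl.2.1 _ (by omega)
    rw [h3]
    have := hn m
    omega
  · have c1 : BoxComp m n l i = n - l (m + 1 - i) := by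
      unfold BoxComp
      rw [if_neg (by omega : ¬ i = 0), if_pos hi]
    by_cases h3 : i + 1 ≤ m
    · have c2 : BoxComp m n l (i + 1) = n - l (m - i) := by
        unfold BoxComp
        rw [if_neg (by omega : ¬ i + 1 = 0), if_pos h3]
        congr 2
        omega
      rw [c1, c2]
      have e1 : m + 1 - i = (m - i) + 1 := by omega
      rw [e1]
      have := hmono (m - i) ((m - i) + 1) (by omega)
      have := hn (m - i)
      have := hn ((m - i) + 1)
      omega
    · have h4 : i = m := by omega
      have c2 : BoxComp m n l (i + 1) = 0 := by
        unfold BoxComp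
        rw [if_neg (by omega : ¬ i + 1 = 0), if_neg h3]
      rw [c1, c2]
      have e1 : m + 1 - i = 1 := by omega
      have e2 : m - i = 0 := by omega
      rw [e1, e2, hl.1]
      norm_num

/-- Key combinatorial fact: the defining set of sums for `fmr` of the complement
contains that of `l`. -/
lemma fmr_set_subset {m n r : ℕ} {l : ℕ → ℕ} (hm : 0 < m) (hr : 2 * r ≤ m)
    (hl : InBox m n l) :
    { S | ∃ t : Fin (m - 2 * r + 1) → ℕ,
      (∀ i j, i ≤ j → t i ≤ t j) ∧ (∀ i, t i ≤ r) ∧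
      S = ∑ j, (l (2 * t j + (j : ℕ)) - l (2 * t j + (j : ℕ) + 1)) } ⊆
    { S | ∃ t : Fin (m - 2 * r + 1) → ℕ,
      (∀ i j, i ≤ j → t i ≤ t j) ∧ (∀ i, t i ≤ r) ∧
      S = ∑ j, (BoxComp m n l (2 * t j + (j : ℕ)) -
        BoxComp m n l (2 * t j + (j : ℕ) + 1)) } := by
  rintro S ⟨t, htmono, htle, rfl⟩
  refine ⟨fun j => r - t j.rev, ?_, fun i => Nat.sub_le _ _, ?_⟩
  · intro i j hij
    show r - t i.rev ≤ r - t j.rev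
    have h1 : j.rev ≤ i.rev := Fin.rev_le_rev.mpr hij
    have h2 := htmono _ _ h1
    omega
  · show ∑ j, (l (2 * t j + (j : ℕ)) - l (2 * t j + (j : ℕ) + 1))
      = ∑ j : Fin (m - 2 * r + 1), (BoxComp m n l (2 * (r - t j.rev) + (j : ℕ)) -
          BoxComp m n l (2 * (r - t j.rev) + (j : ℕ) + 1))
    rw [← Equiv.sum_comp (Fin.revPerm) (fun j : Fin (m - 2 * r + 1) =>
      l (2 * t j + (j : ℕ)) - l (2 * t j + (j : ℕ) + 1))]
    refine Finset.sum_congr rfl fun j _ => ?_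
    have hjv : (j : ℕ) ≤ m - 2 * r := by omega
    have hrev : ((j.rev : Fin (m - 2 * r + 1)) : ℕ) = m - 2 * r - (j : ℕ) := by
      simp [Fin.val_rev]
    have htj : t j.rev ≤ r := htle _
    have hidx : 2 * (r - t j.rev) + (j : ℕ) ≤ m := by omega
    rw [boxComp_diff hm hl hidx]
    have e : m - (2 * (r - t j.rev) + (j : ℕ)) = 2 * t j.rev + ((j.rev : Fin _) : ℕ) := by
      rw [hrev]; omega
    rw [e]
    simp [Fin.revPerm]

lemma fmr_boxComp {m n r : ℕ} {l : ℕ → ℕ} (hm : 0 < m) (hr : 2 * r ≤ m)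
    (hl : InBox m n l) :
    fmr m r (BoxComp m n l) = fmr m r l := by
  unfold fmr
  congr 1
  apply Set.Subset.antisymm
  · have h := fmr_set_subset (m := m) (n := n) (r := r) hm hr
      (boxComp_inBox hm hl)
    rwa [boxComp_boxComp hl] at h
  · exact fmr_set_subset hm hr hl

lemma psize_boxComp {m n : ℕ} {l : ℕ → ℕ} (hl : InBox m n l) :
    psize m (BoxComp m n l) = m * n - psize m l := by
  have key : psize m (BoxComp m n l) + psize m l = m * n := by
    unfold psize
    have : ∑ i ∈ Finset.Icc 1 m, BoxComp m n l i
        = ∑ i ∈ Finset.Icc 1 m, (n - l i) := by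
      refine Finset.sum_nbij' (fun i => m + 1 - i) (fun i => m + 1 - i) ?_ ?_ ?_ ?_ ?_
      all_goals intro a ha; simp only [Finset.mem_Icc] at ha ⊢
      · omega
      · omega
      · show m + 1 - (m + 1 - a) = a
        omega
      · show m + 1 - (m + 1 - a) = a
        omega
      · show BoxComp m n l a = n - l (m + 1 - a)
        unfold BoxComp
        rw [if_neg (by omega : ¬ a = 0), if_pos ha.2]
    rw [this, ← Finset.sum_add_distrib]
    have : ∀ i ∈ Finset.Icc 1 m, (n - l i) + l i = n := by
      intro i _; have := hl.le_n i; omega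
    rw [Finset.sum_congr rfl this, Finset.sum_const, Nat.card_Icc]
    simp [Nat.mul_comm, Nat.smul_one_eq_cast]
  omega

lemma inQ_boxComp {m n : ℕ} {d : Fin (m / 2 + 1) → ℕ} {l : ℕ → ℕ} (hm : 0 < m)
    (hl : InQ m n d l) : InQ m n d (BoxComp m n l) := by
  obtain ⟨hbox, hf⟩ := hl
  refine ⟨boxComp_inBox hm hbox, fun r h1 h2 => ?_⟩
  rw [fmr_boxComp hm (by omega) hbox]
  exact hf r h1 h2

lemma psize_le {m n : ℕ} {l : ℕ → ℕ} (hl : InBox m n l) : psize m l ≤ m * n := by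
  unfold psize
  calc ∑ i ∈ Finset.Icc 1 m, l i ≤ ∑ i ∈ Finset.Icc 1 m, n :=
        Finset.sum_le_sum fun i _ => hl.le_n i
    _ = m * n := by rw [Finset.sum_const, Nat.card_Icc]; simp [Nat.mul_comm, Nat.smul_one_eq_cast]

/-- `Q_m(d_0, …, d_k)` is rank-symmetric about `mn/2`. -/
theorem stmt13 (m n : ℕ) (hm : 0 < m) (hn : 0 < n) (d : Fin (m / 2 + 1) → ℕ)
    (hd : ∑ j : Fin (m / 2 + 1), ((j : ℕ) + 1) * d j = n) (s : ℕ) (hs : s ≤ m * n) :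
    Set.ncard {l : ℕ → ℕ | InQ m n d l ∧ psize m l = s} =
      Set.ncard {l : ℕ → ℕ | InQ m n d l ∧ psize m l = m * n - s} := by
  have himg : {l : ℕ → ℕ | InQ m n d l ∧ psize m l = s}
      = BoxComp m n '' {l : ℕ → ℕ | InQ m n d l ∧ psize m l = m * n - s} := by
    ext l
    constructor
    · rintro ⟨hq, hsz⟩
      refine ⟨BoxComp m n l, ⟨inQ_boxComp hm hq, ?_⟩, boxComp_boxComp hq.1⟩
      rw [psize_boxComp hq.1, hsz]
    · rintro ⟨l', ⟨hq, hsz⟩, rfl⟩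
      refine ⟨inQ_boxComp hm hq, ?_⟩
      rw [psize_boxComp hq.1, hsz]
      omega
  rw [himg]
  apply Set.ncard_image_of_injOn
  intro a ha b hb hab
  have : BoxComp m n (BoxComp m n a) = BoxComp m n (BoxComp m n b) := by rw [hab]
  rwa [boxComp_boxComp ha.1.1, boxComp_boxComp hb.1.1] at this
end
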